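/- arXiv:1111.5840 — 12 statements merged into one kernel-verified Lean document; each statement's English description precedes it below -/
import Mathlib

section
/- Let E ⊆ F be Banach spaces, ε > 0, and let |·|_E be a norm on E that is ε-equivalent to the norm inherited from F (i.e., the identity map between (E, inherited norm) and (E, |·|_E) is an ε-isometry, meaning (1+ε)⁻¹‖x‖ ≤ |x|_E ≤ (1+ε)‖x‖ for all x ∈ E). Then there exists a norm |·|_F on F that extends |·|_E and is ε-equivalent to the original norm of F. -/
/-!
Take `nF x = ⨅ e ∈ E, nE e + (1 + ε) * ‖x - e‖`, the largest seminorm on `F` that is dominated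
by `nE` on `E` and by `(1 + ε) * ‖·‖` everywhere. It restricts to `nE` because `nE` is itself
dominated by `(1 + ε) * ‖·‖`, and it dominates `(1 + ε)⁻¹ * ‖·‖` because that seminorm lies below
both bounds.
-/

open scoped NNReal

namespace Seminorm

variable {𝕜 F : Type*} [NormedField 𝕜] [AddCommGroup F] [Module 𝕜 F] {E : Submodule 𝕜 F}

theorem bddBelow_range_add_sub (p : Seminorm 𝕜 E) (q : Seminorm 𝕜 F) (x : F) :
    BddBelow (Set.range fun e : E => p e + q (x - e)) :=
  ⟨0, by rintro _ ⟨e, rfl⟩; positivity⟩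

noncomputable def infConv (p : Seminorm 𝕜 E) (q : Seminorm 𝕜 F) : Seminorm 𝕜 F :=
  Seminorm.ofSMulLE (fun x => ⨅ e : E, p e + q (x - e))
    (le_antisymm (ciInf_le_of_le (bddBelow_range_add_sub p q 0) 0 (by simp))
      (le_ciInf fun _ => by positivity))
    (fun x y => le_ciInf_add_ciInf fun e f => by
      refine ciInf_le_of_le (bddBelow_range_add_sub p q _) (e + f) ?_
      rw [add_add_add_comm, Submodule.coe_add, add_sub_add_comm]
      exact add_le_add (map_add_le_add p e f) (map_add_le_add q _ _))
    (fun r x => by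
      rw [Real.mul_iInf_of_nonneg (norm_nonneg r)]
      refine le_ciInf fun e => ciInf_le_of_le (bddBelow_range_add_sub p q _) (r • e) ?_
      rw [Submodule.coe_smul, ← smul_sub, map_smul_eq_mul, map_smul_eq_mul, mul_add])

variable (p : Seminorm 𝕜 E) (q : Seminorm 𝕜 F)

theorem infConv_le_add (x : F) (e : E) : p.infConv q x ≤ p e + q (x - e) :=
  ciInf_le (bddBelow_range_add_sub p q x) e

theorem infConv_le_right : p.infConv q ≤ q := fun x => by
  simpa using p.infConv_le_add q x 0

theorem le_infConv {r : Seminorm 𝕜 F} (hp : ∀ e : E, r e ≤ p e) (hq : r ≤ q) :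
    r ≤ p.infConv q := fun x =>
  le_ciInf fun e => calc
    r x ≤ r e + r (x - e) := by simpa using map_add_le_add r (e : F) (x - e)
    _ ≤ p e + q (x - e) := add_le_add (hp e) (hq _)

theorem infConv_apply_coe {p : Seminorm 𝕜 E} {q : Seminorm 𝕜 F} (hpq : ∀ e : E, p e ≤ q e)
    (e : E) : p.infConv q e = p e :=
  le_antisymm (by simpa using p.infConv_le_add q e e)
    (le_ciInf fun f => calc
      p e ≤ p f + p (e - f) := by simpa using map_add_le_add p f (e - f)
      _ ≤ p f + q (e - f) := add_le_add le_rfl (by simpa using hpq (e - f)))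

end Seminorm

theorem norm_extension_eps_equivalent_general
    {F : Type*} [NormedAddCommGroup F] [NormedSpace ℝ F]
    (E : Subspace ℝ F) (ε : ℝ) (hε : 0 < ε)
    (nE : E → ℝ)
    (nE_add : ∀ x y : E, nE (x + y) ≤ nE x + nE y)
    (nE_smul : ∀ (a : ℝ) (x : E), nE (a • x) = |a| * nE x)
    (nE_equiv : ∀ x : E, (1 + ε)⁻¹ * ‖x‖ ≤ nE x ∧ nE x ≤ (1 + ε) * ‖x‖) :
    ∃ nF : F → ℝ,
      (∀ x : F, nF x = 0 ↔ x = 0) ∧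
      (∀ x y : F, nF (x + y) ≤ nF x + nF y) ∧
      (∀ (a : ℝ) (x : F), nF (a • x) = |a| * nF x) ∧
      (∀ x : E, nF (x : F) = nE x) ∧
      (∀ x : F, (1 + ε)⁻¹ * ‖x‖ ≤ nF x ∧ nF x ≤ (1 + ε) * ‖x‖) := by
  let c : ℝ≥0 := ⟨1 + ε, by linarith⟩
  have hc : 1 ≤ c := by
    rw [← NNReal.coe_le_coe]
    exact le_add_of_nonneg_right hε.le
  let p : Seminorm ℝ E := .of nE nE_add fun a x => by rw [nE_smul, Real.norm_eq_abs]
  let q : Seminorm ℝ F := c • normSeminorm ℝ F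
  have hlower : ∀ x : F, (1 + ε)⁻¹ * ‖x‖ ≤ p.infConv q x :=
    p.le_infConv q (r := c⁻¹ • normSeminorm ℝ F) (fun e => (nE_equiv e).1)
      fun x => smul_le_smul_of_nonneg_right ((inv_le_one_of_one_le₀ hc).trans hc) (norm_nonneg x)
  have heq_zero : ∀ x : F, p.infConv q x = 0 → x = 0 := fun x hx => by
    by_contra hx0
    exact (hlower x).not_gt (hx ▸ mul_pos (by positivity) (norm_pos_iff.mpr hx0))
  exact ⟨p.infConv q, fun x => ⟨heq_zero x, fun hx => hx ▸ map_zero _⟩, map_add_le_add _,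
    fun a x => by rw [map_smul_eq_mul, Real.norm_eq_abs],
    Seminorm.infConv_apply_coe fun e => (nE_equiv e).2,
    fun x => ⟨hlower x, p.infConv_le_right q x⟩⟩

/-- **Extension of ε-equivalent norms.** If `E` is a subspace of a Banach space `F`,
`ε > 0`, and `nE` is a norm on `E` that is ε-equivalent to the inherited norm, then
there is a norm `nF` on `F` extending `nE` and ε-equivalent to the original norm of `F`. -/
theorem norm_extension_eps_equivalent
    {F : Type*} [NormedAddCommGroup F] [NormedSpace ℝ F] [CompleteSpace F]
    (E : Subspace ℝ F) (ε : ℝ) (hε : 0 < ε)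
    (nE : E → ℝ)
    (nE_zero : ∀ x : E, nE x = 0 ↔ x = 0)
    (nE_add : ∀ x y : E, nE (x + y) ≤ nE x + nE y)
    (nE_smul : ∀ (a : ℝ) (x : E), nE (a • x) = |a| * nE x)
    (nE_equiv : ∀ x : E, (1 + ε)⁻¹ * ‖x‖ ≤ nE x ∧ nE x ≤ (1 + ε) * ‖x‖) :
    ∃ nF : F → ℝ,
      (∀ x : F, nF x = 0 ↔ x = 0) ∧
      (∀ x y : F, nF (x + y) ≤ nF x + nF y) ∧
      (∀ (a : ℝ) (x : F), nF (a • x) = |a| * nF x) ∧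
      (∀ x : E, nF (x : F) = nE x) ∧
      (∀ x : F, (1 + ε)⁻¹ * ‖x‖ ≤ nF x ∧ nF x ≤ (1 + ε) * ‖x‖) :=
  norm_extension_eps_equivalent_general E ε hε nE nE_add nE_smul nE_equiv
end

section
/- In the pushout construction W = (X ⊕₁ Y)/Δ for an isometric embedding i : Z → X and an isometric embedding f : Z → Y, the map g : X → W given by g(x) = (x,0) + Δ is an isometric embedding (i.e., the isometric version of the Pushout Lemma holds: if f is isometric, then so is g). -/
/-! Taking `y = 0` in the quotient formula, `‖g x‖` is the infimum of `‖x + i z‖ + ‖f z‖`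
over `z`. The choice `z = 0` gives `‖x‖`, and no `z` does better because
`‖x‖ ≤ ‖x + i z‖ + ‖i z‖` and `‖i z‖ = ‖z‖ = ‖f z‖`. -/

theorem isLeast_norm_add_norm_sub {Z X Y : Type*} [Zero Z]
    [SeminormedAddCommGroup X] [SeminormedAddCommGroup Y]
    (i : Z → X) (f : Z → Y) (hi : i 0 = 0) (hf : f 0 = 0)
    (hle : ∀ z, ‖i z‖ ≤ ‖f z‖) (x : X) :
    IsLeast { r : ℝ | ∃ z : Z, r = ‖x + i z‖ + ‖(0 : Y) - f z‖ } ‖x‖ := by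
  refine ⟨⟨0, by simp [hi, hf]⟩, ?_⟩
  rintro r ⟨z, rfl⟩
  calc ‖x‖ ≤ ‖x + i z‖ + ‖i z‖ := norm_le_add_norm_add x (i z)
    _ ≤ ‖x + i z‖ + ‖(0 : Y) - f z‖ := by rw [zero_sub, norm_neg]; gcongr; exact hle z

theorem pushout_lemma_isometric_general
    {Z X Y W : Type*}
    [NormedAddCommGroup Z] [NormedSpace ℝ Z]
    [NormedAddCommGroup X] [NormedSpace ℝ X]
    [NormedAddCommGroup Y] [NormedSpace ℝ Y]
    [NormedAddCommGroup W] [NormedSpace ℝ W]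
    (i : Z →ₗ[ℝ] X) (hi : ∀ z : Z, ‖i z‖ = ‖z‖)
    (f : Z →ₗ[ℝ] Y) (hf : ∀ z : Z, ‖f z‖ = ‖z‖)
    (g : X →ₗ[ℝ] W) (j : Y →ₗ[ℝ] W)
    (hquot : ∀ (x : X) (y : Y),
      ‖g x + j y‖ = sInf { r : ℝ | ∃ z : Z, r = ‖x + i z‖ + ‖y - f z‖ }) :
    ∀ x : X, ‖g x‖ = ‖x‖ := by
  intro x
  rw [← add_zero (g x), ← map_zero j, hquot x 0]
  exact (isLeast_norm_add_norm_sub i f (map_zero i) (map_zero f)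
    (fun z => ((hi z).trans (hf z).symm).le) x).csInf_eq

/-- **Isometric version of the Pushout Lemma.** If `i : Z → X` and `f : Z → Y` are
isometric embeddings of Banach spaces and `W = (X ⊕₁ Y)/Δ` is the pushout space,
with `g x = (x,0)+Δ` (so that the quotient norm satisfies
`‖g x + j y‖ = inf { ‖x + i z‖ + ‖y - f z‖ : z ∈ Z }`), then `g` is an isometric
embedding. -/
theorem pushout_lemma_isometric
    {Z X Y W : Type*}
    [NormedAddCommGroup Z] [NormedSpace ℝ Z] [CompleteSpace Z]
    [NormedAddCommGroup X] [NormedSpace ℝ X] [CompleteSpace X]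
    [NormedAddCommGroup Y] [NormedSpace ℝ Y] [CompleteSpace Y]
    [NormedAddCommGroup W] [NormedSpace ℝ W]
    (i : Z →ₗ[ℝ] X) (hi : ∀ z : Z, ‖i z‖ = ‖z‖)
    (f : Z →ₗ[ℝ] Y) (hf : ∀ z : Z, ‖f z‖ = ‖z‖)
    (g : X →ₗ[ℝ] W) (j : Y →ₗ[ℝ] W)
    (hquot : ∀ (x : X) (y : Y),
      ‖g x + j y‖ = sInf { r : ℝ | ∃ z : Z, r = ‖x + i z‖ + ‖y - f z‖ }) :
    ∀ x : X, ‖g x‖ = ‖x‖ :=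
  pushout_lemma_isometric_general i hi f hf g j hquot
end

section
/- Under the hypotheses of the Pushout Lemma (with i : Z → X an isometric embedding and f : Z → Y a linear operator of norm ≤ 1, W the pushout space with maps g : X → W, j : Y → W), if the image i(Z) is k-complemented in X (there is a bounded projection P : X → Z with P ∘ i = id_Z and ‖P‖ ≤ k), then the image j(Y) is k-complemented in W: there exists a linear operator h : W → Y with ‖h‖ ≤ k and h ∘ j = id_Y. -/
universe u

theorem pushout_complemented_general
    {Z X Y W : Type u}
    [NormedAddCommGroup Z] [NormedSpace ℝ Z]
    [NormedAddCommGroup X] [NormedSpace ℝ X]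
    [NormedAddCommGroup Y] [NormedSpace ℝ Y]
    [NormedAddCommGroup W] [NormedSpace ℝ W]
    (i : Z →ₗᵢ[ℝ] X) (f : Z →L[ℝ] Y) (hf : ‖f‖ ≤ 1)
    (g : X →L[ℝ] W) (j : Y →L[ℝ] W)
    (hpushout : ∀ (V : Type u) [NormedAddCommGroup V] [NormedSpace ℝ V],
      ∀ (T : X →L[ℝ] V) (S : Y →L[ℝ] V), (∀ z : Z, T (i z) = S (f z)) →
        ∃ h : W →L[ℝ] V, (∀ x : X, h (g x) = T x) ∧ (∀ y : Y, h (j y) = S y) ∧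
          ‖h‖ ≤ max ‖T‖ ‖S‖)
    (k : ℝ) (hk : 1 ≤ k)
    (P : X →L[ℝ] Z) (hPi : ∀ z : Z, P (i z) = z) (hPk : ‖P‖ ≤ k) :
    ∃ h : W →L[ℝ] Y, ‖h‖ ≤ k ∧ ∀ y : Y, h (j y) = y := by
  have hcompat : ∀ z : Z, (f.comp P) (i z) = ContinuousLinearMap.id ℝ Y (f z) := fun z => by
    rw [ContinuousLinearMap.comp_apply, hPi z, ContinuousLinearMap.id_apply]
  obtain ⟨h, -, hj, hnorm⟩ := hpushout Y (f.comp P) (ContinuousLinearMap.id ℝ Y) hcompat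
  have hfP : ‖f.comp P‖ ≤ k := calc
    ‖f.comp P‖ ≤ ‖f‖ * ‖P‖ := f.opNorm_comp_le P
    _ ≤ 1 * k := by gcongr
    _ = k := one_mul k
  have hid : ‖ContinuousLinearMap.id ℝ Y‖ ≤ k := ContinuousLinearMap.norm_id_le.trans hk
  exact ⟨h, hnorm.trans (max_le hfP hid), hj⟩

/-- **Complementation and pushouts.** In the pushout of an isometric embedding
`i : Z → X` and an operator `f : Z → Y` of norm `≤ 1` (with the pushout universal
property), if `i(Z)` is `k`-complemented in `X`, i.e. there is `P : X → Z` with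
`P ∘ i = id` and `‖P‖ ≤ k`, then `j(Y)` is `k`-complemented in `W`: there is
`h : W → Y` with `‖h‖ ≤ k` and `h ∘ j = id`. -/
theorem pushout_complemented
    {Z X Y W : Type u}
    [NormedAddCommGroup Z] [NormedSpace ℝ Z] [CompleteSpace Z]
    [NormedAddCommGroup X] [NormedSpace ℝ X] [CompleteSpace X]
    [NormedAddCommGroup Y] [NormedSpace ℝ Y] [CompleteSpace Y]
    [NormedAddCommGroup W] [NormedSpace ℝ W]
    (i : Z →ₗᵢ[ℝ] X) (f : Z →L[ℝ] Y) (hf : ‖f‖ ≤ 1)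
    (g : X →L[ℝ] W) (j : Y →L[ℝ] W)
    (hpushout : ∀ (V : Type u) [NormedAddCommGroup V] [NormedSpace ℝ V],
      ∀ (T : X →L[ℝ] V) (S : Y →L[ℝ] V), (∀ z : Z, T (i z) = S (f z)) →
        ∃ h : W →L[ℝ] V, (∀ x : X, h (g x) = T x) ∧ (∀ y : Y, h (j y) = S y) ∧
          ‖h‖ ≤ max ‖T‖ ‖S‖)
    (k : ℝ) (hk : 1 ≤ k)
    (P : X →L[ℝ] Z) (hPi : ∀ z : Z, P (i z) = z) (hPk : ‖P‖ ≤ k) :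
    ∃ h : W →L[ℝ] Y, ‖h‖ ≤ k ∧ ∀ y : Y, h (j y) = y :=
  pushout_complemented_general i f hf g j hpushout k hk P hPi hPk
end

section
/- If F and G are skeletons in a Banach space X, then F ∩ G is also a skeleton in X. -/
/-- A *skeleton* in a Banach space `X`: a family of closed separable linear subspaces
covering `X`, directed under inclusion, and closed under closures of unions of countable
increasing chains. -/
def IsSkeleton {X : Type*} [NormedAddCommGroup X] [NormedSpace ℝ X]
    (𝔉 : Set (Subspace ℝ X)) : Prop :=
  (∀ F ∈ 𝔉, IsClosed (F : Set X) ∧ TopologicalSpace.IsSeparable (F : Set X)) ∧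
  (⋃ F ∈ 𝔉, (F : Set X)) = Set.univ ∧
  (∀ F₀ ∈ 𝔉, ∀ F₁ ∈ 𝔉, ∃ G ∈ 𝔉, F₀ ≤ G ∧ F₁ ≤ G) ∧
  (∀ F : ℕ → Subspace ℝ X, (∀ n, F n ∈ 𝔉) → Monotone F →
    (⨆ n, F n).topologicalClosure ∈ 𝔉)

/-! Given `F ∈ 𝔉`, alternately enlarge it inside `𝔊` and inside `𝔉` (possible because members
are separable and every separable set lies in a member of a skeleton). The two interleaved
chains have the same union, so the closure of that union lies in both `𝔉` and `𝔊`. -/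

theorem iSup_eq_iSup_of_le_of_le_succ {α : Type*} [CompleteLattice α] {a b : ℕ → α}
    (hab : ∀ n, a n ≤ b n) (hba : ∀ n, b n ≤ a (n + 1)) : ⨆ n, a n = ⨆ n, b n :=
  le_antisymm (iSup_mono hab) (iSup_le fun n => (hba n).trans (le_iSup a (n + 1)))

namespace IsSkeleton

variable {X : Type*} [NormedAddCommGroup X] [NormedSpace ℝ X] {𝔉 𝔊 : Set (Subspace ℝ X)}

theorem exists_mem_containing (h : IsSkeleton 𝔉) (x : X) : ∃ F ∈ 𝔉, x ∈ F := by
  simpa using h.2.1.ge (Set.mem_univ x)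

theorem exists_monotone_ge (h : IsSkeleton 𝔉) (p : ℕ → Subspace ℝ X) (hp : ∀ n, p n ∈ 𝔉) :
    ∃ T : ℕ → Subspace ℝ X, (∀ n, T n ∈ 𝔉) ∧ Monotone T ∧ ∀ n, p n ≤ T n := by
  have directed : ∀ a b : 𝔉, ∃ c : 𝔉, a.1 ≤ c ∧ b.1 ≤ c := fun a b => by
    obtain ⟨c, hc, hac, hbc⟩ := h.2.2.1 a a.2 b b.2
    exact ⟨⟨c, hc⟩, hac, hbc⟩
  choose ub le_ub_left le_ub_right using directed
  let T : ℕ → 𝔉 := fun n =>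
    Nat.rec (motive := fun _ => 𝔉) ⟨p 0, hp 0⟩ (fun m t => ub t ⟨p (m + 1), hp (m + 1)⟩) n
  refine ⟨fun n => (T n : Subspace ℝ X), fun n => (T n).2, ?_, ?_⟩
  · exact monotone_nat_of_le_succ fun n => le_ub_left (T n) _
  · rintro (_ | n)
    exacts [le_rfl, le_ub_right (T n) ⟨p (n + 1), hp (n + 1)⟩]

theorem exists_range_subset (h : IsSkeleton 𝔉) (u : ℕ → X) :
    ∃ F ∈ 𝔉, Set.range u ⊆ F := by
  choose p hp hup using fun n => h.exists_mem_containing (u n)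
  obtain ⟨T, hT, hT_mono, hpT⟩ := h.exists_monotone_ge p hp
  refine ⟨(⨆ n, T n).topologicalClosure, h.2.2.2 T hT hT_mono, ?_⟩
  rintro _ ⟨n, rfl⟩
  exact Submodule.le_topologicalClosure _ (le_iSup T n (hpT n (hup n)))

theorem exists_subset_of_isSeparable (h : IsSkeleton 𝔉) {S : Set X}
    (hS : TopologicalSpace.IsSeparable S) : ∃ F ∈ 𝔉, S ⊆ F := by
  obtain ⟨c, hc, hSc⟩ := hS
  obtain ⟨u, hcu⟩ := Set.countable_iff_exists_subset_range.mp hc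
  obtain ⟨F, hF, huF⟩ := h.exists_range_subset u
  exact ⟨F, hF, hSc.trans (closure_minimal (hcu.trans huF) (h.1 F hF).1)⟩

theorem exists_mem_inter_ge (hF : IsSkeleton 𝔉) (hG : IsSkeleton 𝔊) {p : Subspace ℝ X}
    (hp : p ∈ 𝔉) : ∃ q ∈ 𝔉 ∩ 𝔊, p ≤ q := by
  have enlarge : ∀ {𝔄 𝔅 : Set (Subspace ℝ X)}, IsSkeleton 𝔄 → IsSkeleton 𝔅 →
      ∀ a : 𝔄, ∃ b : 𝔅, a.1 ≤ b := fun hA hB a => by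
    obtain ⟨b, hb, hab⟩ := hB.exists_subset_of_isSeparable (hA.1 a a.2).2
    exact ⟨⟨b, hb⟩, hab⟩
  choose g hg using enlarge hF hG
  choose f hf using enlarge hG hF
  set a : ℕ → Subspace ℝ X := fun n => ((f ∘ g)^[n] ⟨p, hp⟩ : 𝔉)
  set b : ℕ → Subspace ℝ X := fun n => g ((f ∘ g)^[n] ⟨p, hp⟩)
  have hab : ∀ n, a n ≤ b n := fun n => hg _
  have hba : ∀ n, b n ≤ a (n + 1) := fun n => by
    simpa only [a, b, Function.iterate_succ_apply', Function.comp_apply] using hf _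
  have hsup := iSup_eq_iSup_of_le_of_le_succ hab hba
  refine ⟨(⨆ n, a n).topologicalClosure, ⟨?_, ?_⟩, ?_⟩
  · exact hF.2.2.2 a (fun n => Subtype.prop _)
      (monotone_nat_of_le_succ fun n => (hab n).trans (hba n))
  · rw [hsup]
    exact hG.2.2.2 b (fun n => Subtype.prop _)
      (monotone_nat_of_le_succ fun n => (hba n).trans (hab (n + 1)))
  · exact (le_iSup a 0).trans (Submodule.le_topologicalClosure _)

end IsSkeleton

theorem isSkeleton_inter_general
    {X : Type*} [NormedAddCommGroup X] [NormedSpace ℝ X]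
    (𝔉 𝔊 : Set (Subspace ℝ X)) (hF : IsSkeleton 𝔉) (hG : IsSkeleton 𝔊) :
    IsSkeleton (𝔉 ∩ 𝔊) := by
  refine ⟨fun F hF𝔉 => hF.1 F hF𝔉.1, ?_, ?_, ?_⟩
  · refine Set.eq_univ_of_forall fun x => ?_
    obtain ⟨p, hp, hxp⟩ := hF.exists_mem_containing x
    obtain ⟨q, hq, hpq⟩ := hF.exists_mem_inter_ge hG hp
    exact Set.mem_biUnion hq (hpq hxp)
  · intro F₀ h₀ F₁ h₁
    obtain ⟨p, hp, h₀p, h₁p⟩ := hF.2.2.1 F₀ h₀.1 F₁ h₁.1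
    obtain ⟨q, hq, hpq⟩ := hF.exists_mem_inter_ge hG hp
    exact ⟨q, hq, h₀p.trans hpq, h₁p.trans hpq⟩
  · intro F hF𝔉𝔊 hmono
    exact ⟨hF.2.2.2 F (fun n => (hF𝔉𝔊 n).1) hmono, hG.2.2.2 F (fun n => (hF𝔉𝔊 n).2) hmono⟩

/-- **Intersection of skeletons.** If `𝔉` and `𝔊` are skeletons in a Banach space `X`,
then `𝔉 ∩ 𝔊` is also a skeleton in `X`. -/
theorem isSkeleton_inter
    {X : Type*} [NormedAddCommGroup X] [NormedSpace ℝ X] [CompleteSpace X]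
    (𝔉 𝔊 : Set (Subspace ℝ X)) (hF : IsSkeleton 𝔉) (hG : IsSkeleton 𝔊) :
    IsSkeleton (𝔉 ∩ 𝔊) :=
  isSkeleton_inter_general 𝔉 𝔊 hF hG
end

section
/- Let (fₙ : Xₙ → Yₙ) and (gₙ : Yₙ → X_{n+1}) be sequences of linear operators between two increasing chains of finite-dimensional subspaces Xₙ ⊆ E and Yₙ ⊆ F of Banach spaces E, F, such that: fₙ and gₙ are 2⁻ⁿ-isometric embeddings; ‖gₙ(fₙ(x)) − x‖ < 2⁻ⁿ‖x‖ for x ∈ Xₙ; ‖f_{n+1}(gₙ(y)) − y‖ < 2⁻ⁿ‖y‖ for y ∈ Yₙ. Then for every x ∈ Xₙ of norm ≤ 1, ‖fₙ(x) − f_{n+1}(x)‖ < 2^{-n+2}; hence the sequence (fₙ) converges pointwise on ⋃ₙ Xₙ. -/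
/-!
Fix `x ∈ Xₙ ⊆ Xₙ₊₁` and put `ε = 2⁻ⁿ`. Going forth and back, `v = gₙ(fₙ x) ∈ Xₙ₊₁` is within
`ε‖x‖` of `x`, and `fₙ₊₁ v` is within `ε‖fₙ x‖ ≤ 2ε‖x‖` of `fₙ x`. Since `fₙ₊₁` has norm at most
`1 + ε/2 ≤ 3/2`, this gives `‖fₙ x − fₙ₊₁ x‖ ≤ 2ε‖x‖ + (3/2)ε‖x‖ < 4ε‖x‖`. The successive
differences of `(fₘ x)ₘ` therefore decay geometrically, so the sequence is Cauchy.
-/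

open Filter

lemma norm_sub_apply_le_of_near {V F : Type*} [SeminormedAddCommGroup V] [NormedSpace ℝ V]
    [SeminormedAddCommGroup F] [NormedSpace ℝ F] (φ : V →L[ℝ] F) {C : ℝ}
    (hφ : ∀ v, ‖φ v‖ ≤ C * ‖v‖) (p : F) (v x : V) :
    ‖p - φ x‖ ≤ ‖φ v - p‖ + C * ‖v - x‖ :=
  calc ‖p - φ x‖ ≤ ‖p - φ v‖ + ‖φ v - φ x‖ := norm_sub_le_norm_sub_add_norm_sub _ _ _
    _ = ‖φ v - p‖ + ‖φ (v - x)‖ := by rw [norm_sub_rev, map_sub]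
    _ ≤ ‖φ v - p‖ + C * ‖v - x‖ := by gcongr; exact hφ _

section BackAndForth

variable {E F : Type*} [NormedAddCommGroup E] [NormedSpace ℝ E]
    [NormedAddCommGroup F] [NormedSpace ℝ F]
    {X : ℕ → Subspace ℝ E} {Y : ℕ → Subspace ℝ F}
    {f : ∀ n, (X n) →L[ℝ] F} {g : ∀ n, (Y n) →L[ℝ] E}
    {hfY : ∀ n (x : X n), f n x ∈ Y n} {hgX : ∀ n (y : Y n), g n y ∈ X (n + 1)}

lemma norm_sub_succ_le
    (hf : ∀ n (x : X n), ‖f n x‖ ≤ (1 + ((2 : ℝ) ^ n)⁻¹) * ‖x‖)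
    (hgf : ∀ n (x : X n), x ≠ 0 →
      ‖g n ⟨f n x, hfY n x⟩ - (x : E)‖ < ((2 : ℝ) ^ n)⁻¹ * ‖x‖)
    (hfg : ∀ n (y : Y n), y ≠ 0 →
      ‖f (n + 1) ⟨g n y, hgX n y⟩ - (y : F)‖ < ((2 : ℝ) ^ n)⁻¹ * ‖y‖)
    (n : ℕ) (x : X n) (hx : (x : E) ∈ X (n + 1)) :
    ‖f n x - f (n + 1) ⟨x, hx⟩‖ ≤ 7 / 2 * ((2 : ℝ) ^ n)⁻¹ * ‖x‖ := by
  set ε := ((2 : ℝ) ^ n)⁻¹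
  have hε : ε ≤ 1 := inv_le_one_of_one_le₀ (one_le_pow₀ one_le_two)
  set y : Y n := ⟨f n x, hfY n x⟩
  have hy : ‖y‖ ≤ 2 * ‖x‖ := (hf n x).trans (by gcongr; linarith)
  have hnext (v : X (n + 1)) : ‖f (n + 1) v‖ ≤ 3 / 2 * ‖v‖ := by
    have : ((2 : ℝ) ^ (n + 1))⁻¹ ≤ 1 / 2 := by
      rw [pow_succ, mul_inv]
      linarith
    exact (hf (n + 1) v).trans (by gcongr; linarith)
  have hforth : ‖f (n + 1) ⟨g n y, hgX n y⟩ - (y : F)‖ ≤ ε * ‖y‖ := by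
    rcases eq_or_ne y 0 with hy0 | hy0
    · simp [hy0]
      exact map_zero (f (n + 1))
    · exact (hfg n y hy0).le
  have hback : ‖g n y - (x : E)‖ ≤ ε * ‖x‖ := by
    rcases eq_or_ne x 0 with hx0 | hx0
    · simp [y, hx0]
      exact map_zero (g n)
    · exact (hgf n x hx0).le
  calc ‖f n x - f (n + 1) ⟨x, hx⟩‖
      ≤ ‖f (n + 1) ⟨g n y, hgX n y⟩ - (y : F)‖
        + 3 / 2 * ‖(⟨g n y, hgX n y⟩ : X (n + 1)) - ⟨x, hx⟩‖ :=
        norm_sub_apply_le_of_near _ hnext _ _ _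
    _ ≤ ε * (2 * ‖x‖) + 3 / 2 * (ε * ‖x‖) := by
        gcongr
        · exact hforth.trans (by gcongr)
        · exact hback
    _ = 7 / 2 * ε * ‖x‖ := by ring

end BackAndForth

theorem lusky_estimate_general
    {E F : Type*} [NormedAddCommGroup E] [NormedSpace ℝ E]
    [NormedAddCommGroup F] [NormedSpace ℝ F] [CompleteSpace F]
    (X : ℕ → Subspace ℝ E) (Y : ℕ → Subspace ℝ F)
    (hX : Monotone X)
    (f : ∀ n, (X n) →L[ℝ] F) (g : ∀ n, (Y n) →L[ℝ] E)
    (hfY : ∀ n (x : X n), f n x ∈ Y n) (hgX : ∀ n (y : Y n), g n y ∈ X (n + 1))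
    (hf : ∀ n (x : X n),
      (1 + ((2 : ℝ) ^ n)⁻¹)⁻¹ * ‖x‖ ≤ ‖f n x‖ ∧ ‖f n x‖ ≤ (1 + ((2 : ℝ) ^ n)⁻¹) * ‖x‖)
    (hgf : ∀ n (x : X n), x ≠ 0 →
      ‖g n ⟨f n x, hfY n x⟩ - (x : E)‖ < ((2 : ℝ) ^ n)⁻¹ * ‖x‖)
    (hfg : ∀ n (y : Y n), y ≠ 0 →
      ‖f (n + 1) ⟨g n y, hgX n y⟩ - (y : F)‖ < ((2 : ℝ) ^ n)⁻¹ * ‖y‖) :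
    (∀ n (x : X n), ‖x‖ ≤ 1 →
      ‖f n x - f (n + 1) ⟨(x : E), hX (Nat.le_succ n) x.2⟩‖ < 4 * ((2 : ℝ) ^ n)⁻¹) ∧
    (∀ n (x : X n), ∃ L : F,
      Tendsto (fun m => f (n + m) ⟨(x : E), hX (Nat.le_add_right n m) x.2⟩)
        atTop (nhds L)) := by
  have step := norm_sub_succ_le (fun n x => (hf n x).2) hgf hfg
  refine ⟨fun n x hx => ?_, fun n x => ?_⟩
  · calc _ ≤ 7 / 2 * ((2 : ℝ) ^ n)⁻¹ * ‖x‖ := step n x _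
      _ ≤ 7 / 2 * ((2 : ℝ) ^ n)⁻¹ := mul_le_of_le_one_right (by positivity) hx
      _ < 4 * ((2 : ℝ) ^ n)⁻¹ := by gcongr; norm_num
  · refine cauchySeq_tendsto_of_complete <| cauchySeq_of_le_geometric (1 / 2)
      (7 / 2 * ((2 : ℝ) ^ n)⁻¹ * ‖x‖) (by norm_num) fun m => ?_
    rw [dist_eq_norm]
    calc _ ≤ 7 / 2 * ((2 : ℝ) ^ (n + m))⁻¹ * ‖x‖ := step (n + m) ⟨x, _⟩ _
      _ = _ := by rw [pow_add, mul_inv, one_div, inv_pow]; ring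

/-- **The key estimate in Lusky's proof of uniqueness of the Gurarii space.** Given chains
of finite-dimensional subspaces `Xₙ ⊆ E`, `Yₙ ⊆ F` and `2⁻ⁿ`-isometric embeddings
`fₙ : Xₙ → Yₙ`, `gₙ : Yₙ → X_{n+1}` with `‖gₙ(fₙ x) − x‖ < 2⁻ⁿ‖x‖` and
`‖f_{n+1}(gₙ y) − y‖ < 2⁻ⁿ‖y‖` (for nonzero vectors), then for every `x ∈ Xₙ` of norm
`≤ 1` we have `‖fₙ x − f_{n+1} x‖ < 2^{-n+2}`; hence `(fₙ)` converges pointwise on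
`⋃ₙ Xₙ`. -/
theorem lusky_estimate
    {E F : Type*} [NormedAddCommGroup E] [NormedSpace ℝ E] [CompleteSpace E]
    [NormedAddCommGroup F] [NormedSpace ℝ F] [CompleteSpace F]
    (X : ℕ → Subspace ℝ E) (Y : ℕ → Subspace ℝ F)
    (hX : Monotone X) (hY : Monotone Y)
    (hXfin : ∀ n, FiniteDimensional ℝ (X n)) (hYfin : ∀ n, FiniteDimensional ℝ (Y n))
    (f : ∀ n, (X n) →L[ℝ] F) (g : ∀ n, (Y n) →L[ℝ] E)
    (hfY : ∀ n (x : X n), f n x ∈ Y n) (hgX : ∀ n (y : Y n), g n y ∈ X (n + 1))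
    (hf : ∀ n (x : X n),
      (1 + ((2 : ℝ) ^ n)⁻¹)⁻¹ * ‖x‖ ≤ ‖f n x‖ ∧ ‖f n x‖ ≤ (1 + ((2 : ℝ) ^ n)⁻¹) * ‖x‖)
    (hg : ∀ n (y : Y n),
      (1 + ((2 : ℝ) ^ n)⁻¹)⁻¹ * ‖y‖ ≤ ‖g n y‖ ∧ ‖g n y‖ ≤ (1 + ((2 : ℝ) ^ n)⁻¹) * ‖y‖)
    (hgf : ∀ n (x : X n), x ≠ 0 →
      ‖g n ⟨f n x, hfY n x⟩ - (x : E)‖ < ((2 : ℝ) ^ n)⁻¹ * ‖x‖)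
    (hfg : ∀ n (y : Y n), y ≠ 0 →
      ‖f (n + 1) ⟨g n y, hgX n y⟩ - (y : F)‖ < ((2 : ℝ) ^ n)⁻¹ * ‖y‖) :
    (∀ n (x : X n), ‖x‖ ≤ 1 →
      ‖f n x - f (n + 1) ⟨(x : E), hX (Nat.le_succ n) x.2⟩‖ < 4 * ((2 : ℝ) ^ n)⁻¹) ∧
    (∀ n (x : X n), ∃ L : F,
      Tendsto (fun m => f (n + m) ⟨(x : E), hX (Nat.le_add_right n m) x.2⟩)
        atTop (nhds L)) :=
  lusky_estimate_general X Y hX f g hfY hgX hf hgf hfg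
end

section
/- Let X be a Banach space containing an increasing chain (Xₙ) of closed subspaces whose union is dense in X, such that each Xₙ is a Gurarii space (of almost universal disposition for finite-dimensional spaces). Then X is a Gurarii space. -/
universe u v

/-- A Banach space `G` is *Gurarii* (of almost universal disposition for
finite-dimensional spaces) if for every pair of finite-dimensional spaces `E ⊆ F`, every
isometric embedding `f : E → G` and every `ε > 0`, there is an `ε`-isometric embedding
`g : F → G` extending `f`. -/
def IsGurarii (G : Type v) [NormedAddCommGroup G] [NormedSpace ℝ G] : Prop :=
  ∀ (F₀ : Type u) [NormedAddCommGroup F₀] [NormedSpace ℝ F₀] [FiniteDimensional ℝ F₀],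
    ∀ (E₀ : Subspace ℝ F₀) (f : E₀ →ₗᵢ[ℝ] G) (ε : ℝ), 0 < ε →
      ∃ g : F₀ →L[ℝ] G, (∀ x : E₀, g (x : F₀) = f x) ∧
        ∀ x : F₀, (1 + ε)⁻¹ * ‖x‖ ≤ ‖g x‖ ∧ ‖g x‖ ≤ (1 + ε) * ‖x‖

/-!
Approximate the isometry `f : E → X` within `δ` by a map `T : E → Xₙ`, which is possible because
`E` is finite-dimensional and `⋃ Xₙ` is dense; `T` is then an almost isometry. Gurarii spaces
extend almost isometries as well as isometries: renorming `F` by the largest seminorm bounded by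
`c‖·‖` on `F` and by `‖T ·‖` on `E` turns `T` into an isometry. Extending `T` into `Xₙ` and adding
the small defect `(f - T) ∘ P`, for a projection `P : F → E`, gives an almost isometric extension
of `f`.
-/

def IsAlmostIsometry {E F : Type*} [Norm E] [Norm F] (c : ℝ) (g : E → F) : Prop :=
  ∀ x, c⁻¹ * ‖x‖ ≤ ‖g x‖ ∧ ‖g x‖ ≤ c * ‖x‖

section Perturbation

variable {𝕜 E F : Type*} [NontriviallyNormedField 𝕜] [SeminormedAddCommGroup E] [NormedSpace 𝕜 E]
  [SeminormedAddCommGroup F] [NormedSpace 𝕜 F] {c c' r : ℝ}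

theorem IsAlmostIsometry.of_opNorm_sub_le {g h : E →L[𝕜] F} (hg : IsAlmostIsometry c g)
    (hgh : ‖h - g‖ ≤ r) (hr : c + r ≤ c') (hr' : c'⁻¹ + r ≤ c⁻¹) : IsAlmostIsometry c' h := by
  intro x
  have hdiff : ‖h x - g x‖ ≤ r * ‖x‖ := ((h - g).le_opNorm x).trans (by gcongr)
  have hup := norm_sub_norm_le (h x) (g x)
  have hlow := norm_sub_norm_le (g x) (h x)
  rw [norm_sub_rev] at hlow
  have hc := mul_le_mul_of_nonneg_right hr (norm_nonneg x)
  have hc' := mul_le_mul_of_nonneg_right hr' (norm_nonneg x)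
  constructor <;> linarith [hg x]

theorem exists_pos_add_le_and_inv_add_le (hc : 0 < c) (hcc' : c < c') :
    ∃ r > 0, c + r ≤ c' ∧ c'⁻¹ + r ≤ c⁻¹ :=
  ⟨min (c' - c) (c⁻¹ - c'⁻¹), lt_min (sub_pos.2 hcc') (sub_pos.2 (inv_strictAnti₀ hc hcc')),
    by linarith [min_le_left (c' - c) (c⁻¹ - c'⁻¹)],
    by linarith [min_le_right (c' - c) (c⁻¹ - c'⁻¹)]⟩

end Perturbation

theorem exists_approx_of_dense_iUnion {𝕜 X E ι : Type*} [NontriviallyNormedField 𝕜]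
    [CompleteSpace 𝕜] [NormedAddCommGroup X] [NormedSpace 𝕜 X] [NormedAddCommGroup E]
    [NormedSpace 𝕜 E] [FiniteDimensional 𝕜 E] [Nonempty ι] {Xs : ι → Submodule 𝕜 X}
    (hdir : Directed (· ≤ ·) Xs) (hdense : Dense (⋃ i, (Xs i : Set X))) (f : E →L[𝕜] X)
    {η : ℝ} (hη : 0 < η) : ∃ i, ∃ T : E →L[𝕜] Xs i, ‖(Xs i).subtypeL ∘L T - f‖ ≤ η := by
  let b := Module.finBasis 𝕜 E
  obtain ⟨C, hC, hCb⟩ := b.exists_opNorm_le (F := X)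
  have happrox : ∀ k, ∃ i, ∃ y ∈ Xs i, ‖y - f (b k)‖ < η / C := by
    intro k
    obtain ⟨y, hy, hdist⟩ := hdense.exists_dist_lt (f (b k)) (div_pos hη hC)
    obtain ⟨i, hi⟩ := Set.mem_iUnion.1 hy
    exact ⟨i, y, hi, by rwa [← dist_eq_norm, dist_comm]⟩
  choose i y hy hyf using happrox
  obtain ⟨j, hj⟩ := hdir.finite_le i
  refine ⟨j, b.constrL fun k => ⟨y k, hj k (hy k)⟩, ?_⟩
  calc _ ≤ C * (η / C) := hCb (div_pos hη hC).le fun k => by simpa using (hyf k).le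
    _ = η := mul_div_cancel₀ _ hC.ne'

section ExtensionNorm

variable {𝕜 F G : Type*} [NormedField 𝕜] [SeminormedAddCommGroup F] [NormedSpace 𝕜 F]
  [SeminormedAddCommGroup G] [NormedSpace 𝕜 G] {E : Submodule 𝕜 F} {T : E →ₗ[𝕜] G} {c : ℝ}

variable (E T) in
/-- The largest seminorm on `F` that is bounded by `c * ‖·‖` and by `‖T ·‖` on `E`. -/
noncomputable def extensionNorm (c : ℝ) (x : F) : ℝ :=
  ⨅ e : E, c * ‖x - e‖ + ‖T e‖

theorem extensionNorm_le (hc : 0 ≤ c) (x : F) (e : E) :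
    extensionNorm E T c x ≤ c * ‖x - e‖ + ‖T e‖ :=
  ciInf_le ⟨0, by rintro _ ⟨e, rfl⟩; positivity⟩ e

theorem extensionNorm_nonneg (hc : 0 ≤ c) (x : F) : 0 ≤ extensionNorm E T c x :=
  le_ciInf fun _ => by positivity

theorem extensionNorm_le_mul_norm (hc : 0 ≤ c) (x : F) : extensionNorm E T c x ≤ c * ‖x‖ := by
  simpa using extensionNorm_le (T := T) hc x 0

theorem extensionNorm_zero (hc : 0 ≤ c) : extensionNorm E T c 0 = 0 :=
  le_antisymm (by simpa using extensionNorm_le_mul_norm (T := T) hc 0) (extensionNorm_nonneg hc 0)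

theorem extensionNorm_add_le (hc : 0 ≤ c) (x y : F) :
    extensionNorm E T c (x + y) ≤ extensionNorm E T c x + extensionNorm E T c y := by
  refine le_ciInf_add_ciInf fun e₁ e₂ => (extensionNorm_le hc _ (e₁ + e₂)).trans ?_
  have hF : ‖x + y - ↑(e₁ + e₂)‖ ≤ ‖x - e₁‖ + ‖y - e₂‖ := by
    rw [Submodule.coe_add, add_sub_add_comm]
    exact norm_add_le _ _
  have hG : ‖T (e₁ + e₂)‖ ≤ ‖T e₁‖ + ‖T e₂‖ := by
    rw [map_add]
    exact norm_add_le _ _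
  calc c * ‖x + y - ↑(e₁ + e₂)‖ + ‖T (e₁ + e₂)‖
      ≤ c * (‖x - e₁‖ + ‖y - e₂‖) + (‖T e₁‖ + ‖T e₂‖) := by gcongr
    _ = c * ‖x - e₁‖ + ‖T e₁‖ + (c * ‖y - e₂‖ + ‖T e₂‖) := by ring

theorem extensionNorm_smul_le (hc : 0 ≤ c) (a : 𝕜) (x : F) :
    extensionNorm E T c (a • x) ≤ ‖a‖ * extensionNorm E T c x := by
  rw [extensionNorm, extensionNorm, Real.mul_iInf_of_nonneg (norm_nonneg a)]
  refine le_ciInf fun e => (extensionNorm_le hc _ (a • e)).trans_eq ?_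
  rw [Submodule.coe_smul, ← smul_sub, map_smul, norm_smul, norm_smul]
  ring

theorem extensionNorm_coe (hc : 0 ≤ c) (hT : ∀ e, ‖T e‖ ≤ c * ‖e‖) (e : E) :
    extensionNorm E T c e = ‖T e‖ := by
  refine le_antisymm (by simpa using extensionNorm_le hc (e : F) e) (le_ciInf fun e' => ?_)
  calc ‖T e‖ ≤ ‖T (e - e')‖ + ‖T e'‖ := by simpa using norm_add_le (T (e - e')) (T e')
    _ ≤ c * ‖(e : F) - e'‖ + ‖T e'‖ := by gcongr; exact hT _

theorem inv_mul_norm_le_extensionNorm (hc : 1 ≤ c) (hT : ∀ e, c⁻¹ * ‖e‖ ≤ ‖T e‖) (x : F) :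
    c⁻¹ * ‖x‖ ≤ extensionNorm E T c x := by
  refine le_ciInf fun e => ?_
  have hcinv : c⁻¹ ≤ c := (inv_le_one_of_one_le₀ hc).trans hc
  calc c⁻¹ * ‖x‖ ≤ c⁻¹ * ‖x - e‖ + c⁻¹ * ‖(e : F)‖ := by
        rw [← mul_add]; gcongr; exact norm_le_norm_sub_add x e
    _ ≤ c * ‖x - e‖ + ‖T e‖ := by gcongr; exact hT e

end ExtensionNorm

section Gurarii

variable {G : Type v} [NormedAddCommGroup G] [NormedSpace ℝ G]

theorem IsGurarii.exists_extension_of_seminorm (hG : IsGurarii.{u} G) {F : Type u}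
    [AddCommGroup F] [Module ℝ F] [FiniteDimensional ℝ F] (p : Seminorm ℝ F)
    (hp : ∀ x, p x = 0 → x = 0) (E : Submodule ℝ F) (T : E →ₗ[ℝ] G) (hT : ∀ e : E, ‖T e‖ = p e)
    {ε : ℝ} (hε : 0 < ε) :
    ∃ g : F →ₗ[ℝ] G, (∀ e : E, g e = T e) ∧
      ∀ x, (1 + ε)⁻¹ * p x ≤ ‖g x‖ ∧ ‖g x‖ ≤ (1 + ε) * p x := by
  let pNorm : AddGroupNorm F := { p.toAddGroupSeminorm with eq_zero_of_map_eq_zero' := hp }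
  let : NormedAddCommGroup F := pNorm.toNormedAddCommGroup
  let : NormedSpace ℝ F := { norm_smul_le := fun a x => (map_smul_eq_mul p a x).le }
  obtain ⟨g, hgT, hg⟩ := hG F E { T with norm_map' := hT } ε hε
  exact ⟨g, hgT, hg⟩

theorem IsGurarii.exists_extension_of_isAlmostIsometry (hG : IsGurarii.{u} G) {F : Type u}
    [NormedAddCommGroup F] [NormedSpace ℝ F] [FiniteDimensional ℝ F] {E : Submodule ℝ F}
    {T : E →L[ℝ] G} {c c' : ℝ} (hc : 1 ≤ c) (hcc' : c < c') (hT : IsAlmostIsometry c T) :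
    ∃ g : F →L[ℝ] G, (∀ e : E, g e = T e) ∧ IsAlmostIsometry c' g := by
  have hc_pos : 0 < c := zero_lt_one.trans_le hc
  have hc₀ : 0 ≤ c := hc_pos.le
  have hc'_pos : 0 < c' := hc_pos.trans hcc'
  let p : Seminorm ℝ F := .ofSMulLE (extensionNorm E T.toLinearMap c) (extensionNorm_zero hc₀)
    (extensionNorm_add_le hc₀) (extensionNorm_smul_le hc₀)
  have hp_ge (x : F) : c⁻¹ * ‖x‖ ≤ p x := inv_mul_norm_le_extensionNorm hc (fun e => (hT e).1) x
  have hp_le (x : F) : p x ≤ c * ‖x‖ := extensionNorm_le_mul_norm hc₀ x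
  have hpos : ∀ x, p x = 0 → x = 0 := fun x hx =>
    norm_le_zero_iff.1 <| by nlinarith [hp_ge x, inv_pos.2 hc_pos, norm_nonneg x]
  obtain ⟨g, hgT, hg⟩ := hG.exists_extension_of_seminorm p hpos E T.toLinearMap
    (fun e => (extensionNorm_coe hc₀ (fun e => (hT e).2) e).symm)
    (sub_pos.2 ((one_lt_div hc_pos).2 hcc'))
  rw [add_sub_cancel] at hg
  refine ⟨g.toContinuousLinearMap, hgT, fun x => ⟨?_, ?_⟩⟩
  · calc c'⁻¹ * ‖x‖ = (c' / c)⁻¹ * (c⁻¹ * ‖x‖) := by field_simp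
      _ ≤ (c' / c)⁻¹ * p x := mul_le_mul_of_nonneg_left (hp_ge x) (by positivity)
      _ ≤ ‖g x‖ := (hg x).1
  · calc ‖g x‖ ≤ c' / c * p x := (hg x).2
      _ ≤ c' / c * (c * ‖x‖) := mul_le_mul_of_nonneg_left (hp_le x) (by positivity)
      _ = c' * ‖x‖ := by field_simp

end Gurarii

theorem isGurarii_of_chain_general
    {X : Type v} [NormedAddCommGroup X] [NormedSpace ℝ X]
    (Xs : ℕ → Subspace ℝ X) (hmono : Monotone Xs)
    (hdense : Dense (⋃ n, (Xs n : Set X)))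
    (hGur : ∀ n, IsGurarii.{u} (Xs n)) :
    IsGurarii.{u} X := by
  intro F _ _ _ E f ε hε
  obtain ⟨P, hP⟩ := Submodule.ClosedComplemented.of_finiteDimensional E
  obtain ⟨r₁, hr₁, hr₁c, hr₁c'⟩ :=
    exists_pos_add_le_and_inv_add_le (c' := 1 + ε / 4) one_pos (by linarith)
  obtain ⟨r₂, hr₂, hr₂c, hr₂c'⟩ :=
    exists_pos_add_le_and_inv_add_le (c := 1 + ε / 2) (c' := 1 + ε) (by positivity) (by linarith)
  set δ := min r₁ (r₂ / (‖P‖ + 1))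
  obtain ⟨n, T, hT⟩ := exists_approx_of_dense_iUnion hmono.directed_le hdense
    f.toContinuousLinearMap (lt_min hr₁ (by positivity) : 0 < δ)
  have hf : IsAlmostIsometry 1 f.toContinuousLinearMap := fun x => by simp
  have hTc : IsAlmostIsometry (1 + ε / 4) T :=
    hf.of_opNorm_sub_le (hT.trans (min_le_left _ _)) hr₁c hr₁c'
  obtain ⟨g, hgT, hg⟩ := (hGur n).exists_extension_of_isAlmostIsometry (by linarith)
    (by linarith : 1 + ε / 4 < 1 + ε / 2) hTc
  set D := f.toContinuousLinearMap - (Xs n).subtypeL ∘L T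
  have hDP : ‖D ∘L P‖ ≤ r₂ := calc
    ‖D ∘L P‖ ≤ δ * ‖P‖ := (D.opNorm_comp_le P).trans (by gcongr; rwa [norm_sub_rev])
    _ ≤ r₂ / (‖P‖ + 1) * (‖P‖ + 1) := by gcongr <;> linarith [min_le_right r₁ (r₂ / (‖P‖ + 1))]
    _ = r₂ := div_mul_cancel₀ _ (by positivity)
  refine ⟨(Xs n).subtypeL ∘L g + D ∘L P, fun e => by simp [D, hP, hgT], ?_⟩
  exact (show IsAlmostIsometry (1 + ε / 2) ((Xs n).subtypeL ∘L g) from hg).of_opNorm_sub_le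
    (by rwa [add_sub_cancel_left]) hr₂c hr₂c'

/-- **Dense chains of Gurarii subspaces.** If a Banach space `X` contains an increasing
chain of closed subspaces with dense union, each of which is a Gurarii space, then `X`
is a Gurarii space. -/
theorem isGurarii_of_chain
    {X : Type v} [NormedAddCommGroup X] [NormedSpace ℝ X] [CompleteSpace X]
    (Xs : ℕ → Subspace ℝ X) (hmono : Monotone Xs)
    (hclosed : ∀ n, IsClosed ((Xs n : Set X)))
    (hdense : Dense (⋃ n, (Xs n : Set X)))
    (hGur : ∀ n, IsGurarii.{u} (Xs n)) :
    IsGurarii.{u} X :=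
  isGurarii_of_chain_general Xs hmono hdense hGur
end

section
/- Let Γ be a directed family (under inclusion) of closed subspaces of a Banach space X, each isometric to the Gurarii space, with ⋃Γ dense in X. Then every countable subset D ⊆ X is contained in a closed separable subspace of X that is a Gurarii space (obtained as the closure of the union of a countable increasing chain from Γ). -/
universe u v w

/-!
Countably many points of `D`, each approximated by points of countably many members of `Γ`, are
captured by an increasing sequence `S n` in `Γ`; the closure `Y` of `⋃ n, S n` is separable.
`Y` is Gurarii: an isometric embedding `f : E → Y` of a finite-dimensional space is moved, with a
small error, into some `S n` (it suffices to approximate the images of a basis). Since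
`S n ≃ G` is Gurarii, this almost-isometry `u` extends approximately to any `F ⊇ E`: glue `F` to
`E` along `u` by the amalgamation norm on `F × E` and apply the Gurarii property to the
embedding `(0, y) ↦ u y`. A bounded projection onto `E` finally corrects the extension to agree
with `f` exactly on `E`.
-/

/-- A copy of `F × E`, so that the amalgamation norm does not clash with the product norm. -/
def Amalgam (F E : Type*) : Type _ := F × E

instance {F E : Type*} [AddCommGroup F] [AddCommGroup E] : AddCommGroup (Amalgam F E) :=
  inferInstanceAs (AddCommGroup (F × E))

instance {R F E : Type*} [Semiring R] [AddCommGroup F] [AddCommGroup E] [Module R F] [Module R E] :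
    Module R (Amalgam F E) :=
  inferInstanceAs (Module R (F × E))

section Amalgam

variable {F V : Type*} [NormedAddCommGroup F] [NormedSpace ℝ F] [NormedAddCommGroup V]
  [NormedSpace ℝ V] {E : Submodule ℝ F}

/-- The largest seminorm on `F × E` with `‖(x, 0)‖ ≤ ‖x‖`, `‖(0, y)‖ ≤ ‖u y‖` and
`‖(e, -e)‖ ≤ θ * ‖e‖`: it glues `F` to `V` along `u` up to the defect `θ`. -/
noncomputable def amalgamNorm (u : E →ₗ[ℝ] V) (θ : ℝ) (p : F × E) : ℝ :=
  ⨅ e : E, ‖p.1 - e‖ + ‖u (p.2 + e)‖ + θ * ‖e‖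

variable {u : E →ₗ[ℝ] V} {θ : ℝ}

theorem amalgamNorm_le (hθ : 0 ≤ θ) (p : F × E) (e : E) :
    amalgamNorm u θ p ≤ ‖p.1 - e‖ + ‖u (p.2 + e)‖ + θ * ‖e‖ :=
  ciInf_le ⟨0, by rintro _ ⟨e, rfl⟩; positivity⟩ e

theorem le_amalgamNorm {p : F × E} {c : ℝ}
    (h : ∀ e : E, c ≤ ‖p.1 - e‖ + ‖u (p.2 + e)‖ + θ * ‖e‖) : c ≤ amalgamNorm u θ p :=
  le_ciInf h

theorem amalgamNorm_zero (hθ : 0 ≤ θ) : amalgamNorm u θ 0 = 0 :=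
  le_antisymm (by simpa using amalgamNorm_le (u := u) hθ 0 0)
    (le_amalgamNorm fun _ => by positivity)

theorem amalgamNorm_add_le (hθ : 0 ≤ θ) (p q : F × E) :
    amalgamNorm u θ (p + q) ≤ amalgamNorm u θ p + amalgamNorm u θ q := by
  refine le_ciInf_add_ciInf fun e₁ e₂ => (amalgamNorm_le hθ _ (e₁ + e₂)).trans ?_
  have h₁ : (p + q).1 - ↑(e₁ + e₂) = (p.1 - e₁) + (q.1 - e₂) := by
    rw [Prod.fst_add, Submodule.coe_add]; abel
  have h₂ : u ((p + q).2 + (e₁ + e₂)) = u (p.2 + e₁) + u (q.2 + e₂) := by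
    rw [← map_add, Prod.snd_add]; abel_nf
  rw [h₁, h₂]
  have := mul_le_mul_of_nonneg_left (norm_add_le e₁ e₂) hθ
  linarith [norm_add_le (p.1 - e₁) (q.1 - e₂), norm_add_le (u (p.2 + e₁)) (u (q.2 + e₂))]

theorem amalgamNorm_smul_le (hθ : 0 ≤ θ) (c : ℝ) (p : F × E) :
    amalgamNorm u θ (c • p) ≤ ‖c‖ * amalgamNorm u θ p := by
  conv_rhs => rw [amalgamNorm, Real.mul_iInf_of_nonneg (norm_nonneg c)]
  refine le_ciInf fun e => (amalgamNorm_le hθ _ (c • e)).trans_eq ?_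
  simp only [Prod.smul_fst, Prod.smul_snd, Submodule.coe_smul, ← smul_sub, ← smul_add, map_smul,
    norm_smul]
  ring

theorem amalgamNorm_neg (hθ : 0 ≤ θ) (p : F × E) : amalgamNorm u θ (-p) = amalgamNorm u θ p :=
  le_antisymm (by simpa using amalgamNorm_smul_le (u := u) hθ (-1) p)
    (by simpa using amalgamNorm_smul_le (u := u) hθ (-1) (-p))

theorem eq_zero_of_amalgamNorm_eq_zero (hθ : 0 < θ) (hθ₁ : θ < 1)
    (hu : ∀ e : E, (1 - θ) * ‖e‖ ≤ ‖u e‖) {p : F × E} (hp : amalgamNorm u θ p = 0) : p = 0 := by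
  set c := min θ (1 - θ)
  have hc : 0 < c := lt_min hθ (by linarith)
  have hcθ : c ≤ θ := min_le_left _ _
  have hcθ' : c ≤ 1 - θ := min_le_right _ _
  have h₁ : c * ‖p.1‖ ≤ amalgamNorm u θ p := le_amalgamNorm fun e => by
    rw [Submodule.coe_norm]
    nlinarith [norm_le_insert' p.1 (e : F), norm_nonneg (p.1 - e), norm_nonneg (u (p.2 + e)),
      norm_nonneg (e : F)]
  have h₂ : c * ‖p.2‖ ≤ amalgamNorm u θ p := le_amalgamNorm fun e => by
    nlinarith [norm_le_add_norm_add p.2 e, norm_nonneg (p.1 - e), hu (p.2 + e), norm_nonneg e,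
      norm_nonneg (p.2 + e)]
  rw [hp] at h₁ h₂
  exact Prod.ext (norm_le_zero_iff.1 (nonpos_of_mul_nonpos_right h₁ hc))
    (norm_le_zero_iff.1 (nonpos_of_mul_nonpos_right h₂ hc))

theorem amalgamNorm_inl (hθ : 0 ≤ θ) (hu : ∀ e : E, (1 - θ) * ‖e‖ ≤ ‖u e‖) (x : F) :
    amalgamNorm u θ (x, 0) = ‖x‖ := by
  refine le_antisymm (by simpa using amalgamNorm_le (u := u) hθ (x, 0) 0)
    (le_amalgamNorm fun e => ?_)
  have := hu e
  simp only [zero_add]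
  linarith [norm_le_insert' x (e : F), Submodule.coe_norm e]

theorem amalgamNorm_inr (hθ : 0 ≤ θ) (hu : ∀ e : E, ‖u e‖ ≤ (1 + θ) * ‖e‖) (y : E) :
    amalgamNorm u θ (0, y) = ‖u y‖ := by
  refine le_antisymm (by simpa using amalgamNorm_le (u := u) hθ (0, y) 0)
    (le_amalgamNorm fun e => ?_)
  have := hu e
  dsimp only
  rw [map_add, zero_sub, norm_neg]
  linarith [norm_le_add_norm_add (u y) (u e), Submodule.coe_norm e]

theorem amalgamNorm_diag_le (hθ : 0 ≤ θ) (e : E) : amalgamNorm u θ ((e : F), -e) ≤ θ * ‖e‖ := by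
  simpa using amalgamNorm_le (u := u) hθ ((e : F), -e) e

noncomputable def amalgamAddGroupNorm (hθ : 0 < θ) (hθ₁ : θ < 1)
    (hu : ∀ e : E, (1 - θ) * ‖e‖ ≤ ‖u e‖) : AddGroupNorm (Amalgam F E) where
  toFun := amalgamNorm u θ
  map_zero' := amalgamNorm_zero hθ.le
  add_le' := amalgamNorm_add_le hθ.le
  neg' := amalgamNorm_neg hθ.le
  eq_zero_of_map_eq_zero' _ := eq_zero_of_amalgamNorm_eq_zero hθ hθ₁ hu

end Amalgam

theorem IsGurarii.exists_near_extension {G : Type w} [NormedAddCommGroup G] [NormedSpace ℝ G]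
    (hG : IsGurarii.{u} G) {F : Type u} [NormedAddCommGroup F] [NormedSpace ℝ F]
    [FiniteDimensional ℝ F] (E : Submodule ℝ F) (u : E →ₗ[ℝ] G) {θ ε : ℝ} (hθ : 0 < θ)
    (hθ₁ : θ < 1) (hε : 0 < ε) (hu : ∀ e : E, (1 - θ) * ‖e‖ ≤ ‖u e‖ ∧ ‖u e‖ ≤ (1 + θ) * ‖e‖) :
    ∃ g : F →ₗ[ℝ] G, (∀ e : E, ‖g e - u e‖ ≤ (1 + ε) * θ * ‖e‖) ∧
      ∀ x, (1 + ε)⁻¹ * ‖x‖ ≤ ‖g x‖ ∧ ‖g x‖ ≤ (1 + ε) * ‖x‖ := by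
  let _ : NormedAddCommGroup (Amalgam F E) :=
    (amalgamAddGroupNorm hθ hθ₁ fun e => (hu e).1).toNormedAddCommGroup
  let _ : NormedSpace ℝ (Amalgam F E) := ⟨fun c p => amalgamNorm_smul_le hθ.le c p⟩
  have _ : FiniteDimensional ℝ (Amalgam F E) := inferInstanceAs (FiniteDimensional ℝ (F × E))
  let E' : Submodule ℝ (Amalgam F E) := LinearMap.ker (LinearMap.fst ℝ F E : Amalgam F E →ₗ[ℝ] F)
  let f : E' →ₗᵢ[ℝ] G :=
    { toLinearMap := u ∘ₗ (LinearMap.snd ℝ F E : Amalgam F E →ₗ[ℝ] E) ∘ₗ E'.subtype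
      norm_map' := by
        rintro ⟨⟨x, y⟩, hxy : x = 0⟩
        subst hxy
        exact (amalgamNorm_inr hθ.le (fun e => (hu e).2) y).symm }
  obtain ⟨g, hgf, hg⟩ := hG (Amalgam F E) E' f ε hε
  let inl : F →ₗ[ℝ] Amalgam F E := LinearMap.inl ℝ F E
  let inr : E →ₗ[ℝ] Amalgam F E := LinearMap.inr ℝ F E
  have hinl (x : F) : ‖inl x‖ = ‖x‖ := amalgamNorm_inl hθ.le (fun e => (hu e).1) x
  refine ⟨g.toLinearMap ∘ₗ inl, fun e => ?_, fun x => hinl x ▸ hg (inl x)⟩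
  have hue : u e = g (inr e) := (hgf ⟨inr e, rfl⟩).symm
  have hdiag : ‖inl e - inr e‖ ≤ θ * ‖e‖ := by
    show amalgamNorm u θ ((e : F) - 0, 0 - e) ≤ θ * ‖e‖
    simpa using amalgamNorm_diag_le hθ.le e
  calc ‖g (inl e) - u e‖ = ‖g (inl e - inr e)‖ := by rw [hue, map_sub]
    _ ≤ (1 + ε) * ‖inl e - inr e‖ := (hg _).2
    _ ≤ (1 + ε) * θ * ‖e‖ := by
        rw [mul_assoc]
        exact mul_le_mul_of_nonneg_left hdiag (by linarith)

theorem Submodule.exists_extension_near {F G : Type*} [NormedAddCommGroup F] [NormedSpace ℝ F]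
    [FiniteDimensional ℝ F] [NormedAddCommGroup G] [NormedSpace ℝ G] (E : Submodule ℝ F) :
    ∃ C, 0 < C ∧ ∀ (f : E →ₗ[ℝ] G) (h : F →ₗ[ℝ] G) {η : ℝ}, 0 ≤ η →
      (∀ x : E, ‖h x - f x‖ ≤ η * ‖x‖) →
        ∃ g : F →ₗ[ℝ] G, (∀ x : E, g x = f x) ∧ ∀ x, ‖g x - h x‖ ≤ C * η * ‖x‖ := by
  obtain ⟨q, hq⟩ := E.exists_isCompl
  let P := E.projectionOnto q hq
  let P' : F →L[ℝ] E := LinearMap.toContinuousLinearMap P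
  refine ⟨‖P'‖ + 1, by positivity, fun f h η hη hhf =>
    ⟨h + (f - h ∘ₗ E.subtype) ∘ₗ P, fun x => ?_, fun x => ?_⟩⟩
  · simp [P, Submodule.projectionOnto_apply_left]
  · calc ‖(h + (f - h ∘ₗ E.subtype) ∘ₗ P) x - h x‖ = ‖h (P x) - f (P x)‖ := by
          simp [norm_sub_rev]
      _ ≤ η * ‖P' x‖ := hhf _
      _ ≤ η * ((‖P'‖ + 1) * ‖x‖) := by
          gcongr
          nlinarith [P'.le_opNorm x, norm_nonneg x]
      _ = (‖P'‖ + 1) * η * ‖x‖ := by ring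

theorem isGurarii_of_forall_exists_near {G : Type*} [NormedAddCommGroup G] [NormedSpace ℝ G]
    (h : ∀ (F₀ : Type u) [NormedAddCommGroup F₀] [NormedSpace ℝ F₀] [FiniteDimensional ℝ F₀]
      (E₀ : Subspace ℝ F₀) (f : E₀ →ₗᵢ[ℝ] G) {ε η : ℝ}, 0 < ε → 0 < η →
      ∃ g : F₀ →ₗ[ℝ] G, (∀ x : E₀, ‖g x - f x‖ ≤ η * ‖x‖) ∧
        ∀ x, (1 + ε)⁻¹ * ‖x‖ ≤ ‖g x‖ ∧ ‖g x‖ ≤ (1 + ε) * ‖x‖) :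
    IsGurarii.{u} G := by
  intro F₀ _ _ _ E₀ f ε hε
  obtain ⟨C, hC, hext⟩ := E₀.exists_extension_near (G := G)
  obtain ⟨κ, hκ, hκ_inv, hκ_le⟩ : ∃ κ : ℝ, 0 < κ ∧ (1 + ε / 2)⁻¹ - κ = (1 + ε)⁻¹ ∧ κ ≤ ε / 2 :=
    ⟨ε / 2 / ((1 + ε / 2) * (1 + ε)), by positivity, by field_simp; ring,
      div_le_self (by positivity) (by nlinarith)⟩
  obtain ⟨h, hhf, hh⟩ := h F₀ E₀ f (ε := ε / 2) (η := κ / C) (by positivity) (by positivity)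
  obtain ⟨g, hgf, hgh⟩ := hext f.toLinearMap h (div_pos hκ hC).le hhf
  rw [mul_div_cancel₀ _ hC.ne'] at hgh
  refine ⟨LinearMap.toContinuousLinearMap g, hgf, fun x => ?_⟩
  rw [LinearMap.coe_toContinuousLinearMap', ← hκ_inv, sub_mul]
  have hκx := mul_le_mul_of_nonneg_right hκ_le (norm_nonneg x)
  constructor
  · linarith [norm_le_insert' (h x) (g x), norm_sub_rev (h x) (g x), (hh x).1, hgh x]
  · linarith [norm_le_insert' (g x) (h x), (hh x).2, hgh x]

theorem IsGurarii.of_linearIsometryEquiv {G H : Type*} [NormedAddCommGroup G] [NormedSpace ℝ G]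
    [NormedAddCommGroup H] [NormedSpace ℝ H] (hG : IsGurarii.{u} G) (φ : G ≃ₗᵢ[ℝ] H) :
    IsGurarii.{u} H := by
  intro F₀ _ _ _ E₀ f ε hε
  obtain ⟨g, hgf, hg⟩ := hG F₀ E₀ (φ.symm.toLinearIsometry.comp f) ε hε
  refine ⟨(φ : G →L[ℝ] H).comp g, fun x => ?_, fun x => ?_⟩
  · simp [hgf]
  · simpa using hg x

theorem Submodule.coe_topologicalClosure_iSup_of_directed {X : Type*} [NormedAddCommGroup X]
    [NormedSpace ℝ X] {ι : Type*} [Nonempty ι] {S : ι → Submodule ℝ X}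
    (hS : Directed (· ≤ ·) S) :
    ((⨆ i, S i).topologicalClosure : Set X) = closure (⋃ i, (S i : Set X)) := by
  rw [Submodule.topologicalClosure_coe, Submodule.coe_iSup_of_directed S hS]

theorem exists_linearMap_near_of_forall_mem_closure_iUnion {X E : Type*} [NormedAddCommGroup X]
    [NormedSpace ℝ X] [NormedAddCommGroup E] [NormedSpace ℝ E] [FiniteDimensional ℝ E]
    {ι : Type*} [Nonempty ι] {S : ι → Submodule ℝ X} (hS : Directed (· ≤ ·) S) (f : E →ₗ[ℝ] X)
    (hf : ∀ x, f x ∈ closure (⋃ i, (S i : Set X))) {η : ℝ} (hη : 0 < η) :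
    ∃ i, ∃ g : E →ₗ[ℝ] S i, ∀ x, ‖(g x : X) - f x‖ ≤ η * ‖x‖ := by
  let b := Module.finBasis ℝ E
  obtain ⟨C, hC, hb⟩ := b.exists_opNorm_le (F := X)
  have hnear (k) : ∃ i, ∃ z ∈ S i, dist z (f (b k)) < η / C := by
    obtain ⟨z, hz, hdist⟩ := Metric.mem_closure_iff.1 (hf (b k)) (η / C) (by positivity)
    obtain ⟨i, hi⟩ := Set.mem_iUnion.1 hz
    exact ⟨i, z, hi, by rwa [dist_comm]⟩
  choose i z hzS hz using hnear
  obtain ⟨j, hj⟩ := hS.finite_le i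
  let g : E →ₗ[ℝ] S j := b.constr ℝ fun k => ⟨z k, hj k (hzS k)⟩
  let d : E →L[ℝ] X := LinearMap.toContinuousLinearMap ((S j).subtype ∘ₗ g - f)
  have hd : ‖d‖ ≤ C * (η / C) :=
    hb (by positivity) fun k => by simpa [d, g, dist_eq_norm] using (hz k).le
  rw [mul_div_cancel₀ _ hC.ne'] at hd
  exact ⟨j, g, fun x => (d.le_opNorm x).trans (by gcongr)⟩

theorem isGurarii_topologicalClosure_iSup {X : Type*} [NormedAddCommGroup X] [NormedSpace ℝ X]
    {ι : Type*} [Nonempty ι] {S : ι → Submodule ℝ X} (hS : Directed (· ≤ ·) S)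
    (hG : ∀ i, IsGurarii.{u} (S i)) : IsGurarii.{u} (⨆ i, S i).topologicalClosure := by
  set Y := (⨆ i, S i).topologicalClosure
  refine isGurarii_of_forall_exists_near fun F₀ _ _ _ E₀ f ε η hε hη => ?_
  set θ := min (1 / 2) (η / (2 + ε))
  have hθ : 0 < θ := by positivity
  have hθη : (2 + ε) * θ ≤ η := by
    rw [← le_div_iff₀' (by positivity)]; exact min_le_right _ _
  obtain ⟨i, v, hv⟩ := exists_linearMap_near_of_forall_mem_closure_iUnion hS
    (Y.subtype ∘ₗ f.toLinearMap)
    (fun x => Submodule.coe_topologicalClosure_iSup_of_directed hS ▸ (f x).2) hθ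
  have hfx (x : E₀) : ‖(f x : X)‖ = ‖x‖ := f.norm_map x
  have hv' (x : E₀) : (1 - θ) * ‖x‖ ≤ ‖v x‖ ∧ ‖v x‖ ≤ (1 + θ) * ‖x‖ := by
    have : ‖(v x : X) - f x‖ ≤ θ * ‖x‖ := hv x
    constructor <;> linarith [norm_le_insert' (f x : X) (v x : X),
      norm_le_insert' (v x : X) (f x : X), norm_sub_rev (f x : X) (v x : X),
      Submodule.coe_norm (v x), hfx x]
  obtain ⟨g, hgv, hg⟩ := (hG i).exists_near_extension E₀ v hθ
    ((min_le_left _ _).trans_lt (by norm_num)) hε hv'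
  let incl : S i →ₗ[ℝ] Y :=
    Submodule.inclusion ((le_iSup S i).trans (Submodule.le_topologicalClosure _))
  refine ⟨incl ∘ₗ g, fun x => ?_, hg⟩
  calc ‖incl (g x) - f x‖ = ‖((g x : S i) : X) - f x‖ := rfl
    _ ≤ ‖((g x : S i) : X) - v x‖ + ‖(v x : X) - f x‖ := norm_sub_le_norm_sub_add_norm_sub _ _ _
    _ ≤ (1 + ε) * θ * ‖x‖ + θ * ‖x‖ := add_le_add (hgv x) (hv x)
    _ = (2 + ε) * θ * ‖x‖ := by ring
    _ ≤ η * ‖x‖ := by gcongr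

theorem exists_monotone_seq_forall_exists_le {α ι : Type*} [Preorder α] [IsDirectedOrder α]
    [Nonempty α] [Countable ι] (c : ι → α) : ∃ s : ℕ → α, Monotone s ∧ ∀ i, ∃ n, c i ≤ s n := by
  obtain ⟨e, he⟩ := exists_surjective_nat (Option ι)
  let c' : ℕ → α := fun n => (e n).elim (Classical.arbitrary α) c
  choose ub hub₁ hub₂ using directed_of (α := α) (· ≤ ·)
  let s : ℕ → α := fun n => Nat.rec (c' 0) (fun n t => ub t (c' (n + 1))) n
  have hc's : ∀ n, c' n ≤ s n
    | 0 => le_rfl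
    | n + 1 => hub₂ _ _
  refine ⟨s, monotone_nat_of_le_succ fun n => hub₁ _ _, fun i => ?_⟩
  obtain ⟨n, hn⟩ := he (some i)
  exact ⟨n, by simpa [c', hn] using hc's n⟩

theorem DirectedOn.exists_monotone_seq_subset_closure {A X : Type*} [SetLike A X] [Preorder A]
    [IsConcreteLE A X] [PseudoMetricSpace X] [Nonempty X] {Γ : Set A} (hΓ : DirectedOn (· ≤ ·) Γ)
    (hdense : Dense (⋃ F ∈ Γ, (F : Set X))) {D : Set X} (hD : D.Countable) :
    ∃ s : ℕ → A, Monotone s ∧ (∀ n, s n ∈ Γ) ∧ D ⊆ closure (⋃ n, (s n : Set X)) := by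
  have := hΓ.isDirectedOrder
  have : Nonempty Γ := by
    obtain ⟨x, hx⟩ := hdense.nonempty
    obtain ⟨F, hF, -⟩ := Set.mem_iUnion₂.1 hx
    exact ⟨⟨F, hF⟩⟩
  have := hD.to_subtype
  have hnear (p : D × ℕ) : ∃ F : Γ, ∃ z ∈ (F : A), dist (p.1 : X) z < 1 / (p.2 + 1) := by
    obtain ⟨z, hz, hdist⟩ := Metric.mem_closure_iff.1 (hdense (p.1 : X)) _ Nat.one_div_pos_of_nat
    obtain ⟨F, hF, hzF⟩ := Set.mem_iUnion₂.1 hz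
    exact ⟨⟨F, hF⟩, z, hzF, hdist⟩
  choose F z hzF hz using hnear
  obtain ⟨s, hs, hFs⟩ := exists_monotone_seq_forall_exists_le F
  refine ⟨fun n => s n, fun m n h => hs h, fun n => (s n).2, fun d hd => ?_⟩
  refine Metric.mem_closure_iff.2 fun ε hε => ?_
  obtain ⟨m, hm⟩ := exists_nat_one_div_lt hε
  obtain ⟨n, hn⟩ := hFs (⟨d, hd⟩, m)
  have hn' : ((F (⟨d, hd⟩, m) : Γ) : A) ≤ s n := hn
  exact ⟨z _, Set.mem_iUnion.2 ⟨n, SetLike.coe_subset_coe.2 hn' (hzF _)⟩,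
    (hz (⟨d, hd⟩, m)).trans hm⟩

theorem countable_subset_gurarii_general
    {X : Type v} [NormedAddCommGroup X] [NormedSpace ℝ X]
    (G : Type w) [NormedAddCommGroup G] [NormedSpace ℝ G]
    [TopologicalSpace.SeparableSpace G] (hG : IsGurarii.{u} G)
    (Γ : Set (Subspace ℝ X))
    (hiso : ∀ F ∈ Γ, Nonempty (F ≃ₗᵢ[ℝ] G))
    (hdir : ∀ F₀ ∈ Γ, ∀ F₁ ∈ Γ, ∃ H ∈ Γ, F₀ ≤ H ∧ F₁ ≤ H)
    (hdense : Dense (⋃ F ∈ Γ, (F : Set X)))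
    (D : Set X) (hD : D.Countable) :
    ∃ Y : Subspace ℝ X, IsClosed (Y : Set X) ∧
      TopologicalSpace.IsSeparable (Y : Set X) ∧ D ⊆ (Y : Set X) ∧
      IsGurarii.{u} Y := by
  obtain ⟨S, hS, hSΓ, hDS⟩ := DirectedOn.exists_monotone_seq_subset_closure hdir hdense hD
  have hY := Submodule.coe_topologicalClosure_iSup_of_directed hS.directed_le
  have hsep (n : ℕ) : TopologicalSpace.IsSeparable (S n : Set X) := by
    obtain ⟨φ⟩ := hiso _ (hSΓ n)
    have := φ.symm.surjective.denseRange.separableSpace φ.symm.continuous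
    exact .of_subtype _
  refine ⟨_, Submodule.isClosed_topologicalClosure _,
    hY ▸ (TopologicalSpace.IsSeparable.iUnion hsep).closure, hY ▸ hDS,
    isGurarii_topologicalClosure_iSup hS.directed_le fun n => ?_⟩
  obtain ⟨φ⟩ := hiso _ (hSΓ n)
  exact hG.of_linearIsometryEquiv φ.symm

/-- **Capturing countable sets in Gurarii subspaces.** Let `Γ` be a family of closed
subspaces of a Banach space `X`, directed under inclusion, with dense union, each
isometric to the (separable) Gurarii space `G`. Then every countable subset `D ⊆ X`
is contained in a closed separable subspace of `X` that is a Gurarii space. -/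
theorem countable_subset_gurarii
    {X : Type v} [NormedAddCommGroup X] [NormedSpace ℝ X] [CompleteSpace X]
    (G : Type w) [NormedAddCommGroup G] [NormedSpace ℝ G] [CompleteSpace G]
    [TopologicalSpace.SeparableSpace G] (hG : IsGurarii.{u} G)
    (Γ : Set (Subspace ℝ X))
    (hclosed : ∀ F ∈ Γ, IsClosed (F : Set X))
    (hiso : ∀ F ∈ Γ, Nonempty (F ≃ₗᵢ[ℝ] G))
    (hdir : ∀ F₀ ∈ Γ, ∀ F₁ ∈ Γ, ∃ H ∈ Γ, F₀ ≤ H ∧ F₁ ≤ H)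
    (hdense : Dense (⋃ F ∈ Γ, (F : Set X)))
    (D : Set X) (hD : D.Countable) :
    ∃ Y : Subspace ℝ X, IsClosed (Y : Set X) ∧
      TopologicalSpace.IsSeparable (Y : Set X) ∧ D ⊆ (Y : Set X) ∧
      IsGurarii.{u} Y :=
  countable_subset_gurarii_general G hG Γ hiso hdir hdense D hD
end

section
/- Let U and V be Banach spaces of universal disposition for the class of Banach spaces of density < κ (κ a regular uncountable cardinal), each of density κ. Then every bijective linear isometry f : X → Y between a subspace X ⊆ U of density < κ and a subspace Y ⊆ V of density < κ extends to a bijective linear isometry h : U → V. In particular, U and V are linearly isometric. -/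
/-!
Back and forth. A linear isometry between subspaces of `U` and `V` is encoded by its graph, a
submodule of `U × V` on which `‖p.1‖ = ‖p.2‖`; call it small if it has density `< κ`. Universal
disposition of `V`, applied to the closed span of the domain and a point `u : U` (still of
density `< κ` because `κ > ℵ₀`), enlarges a small graph so that `u` enters its domain; swapping
the factors, universal disposition of `U` does the same for the range. Enumerate dense subsets of
`U` and `V` of size `≤ κ` by `κ.ord` and build, starting from the graph of `f`, an increasing
chain of small graphs, stage `i` absorbing the `i`-th points; regularity of `κ` keeps the union
of the earlier stages small. The union of the whole chain is an isometric graph with dense domain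
and dense range, and by completeness its closure is the graph of a surjective isometry.
-/
universe u

open Cardinal

/-- A Banach space `U` is of *universal disposition* for the class of Banach spaces of
density `< κ` if for every pair `S ⊆ T` of Banach spaces with `T` of density `< κ` and
every isometric embedding `f : S → U`, there is an isometric embedding `g : T → U`
extending `f`. -/
def UnivDispLT (U : Type u) [NormedAddCommGroup U] [NormedSpace ℝ U]
    (κ : Cardinal.{u}) : Prop :=
  ∀ (T : Type u) [NormedAddCommGroup T] [NormedSpace ℝ T] [CompleteSpace T],
    (∃ s : Set T, Dense s ∧ #s < κ) →
    ∀ (S : Subspace ℝ T) (f : S →ₗᵢ[ℝ] U),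
      ∃ g : T →ₗᵢ[ℝ] U, ∀ x : S, g (x : T) = f x

/-- A Banach space has *density `κ`* if it has a dense subset of cardinality `≤ κ` but
no dense subset of cardinality `< κ`. -/
def DensityEq (U : Type u) [NormedAddCommGroup U] (κ : Cardinal.{u}) : Prop :=
  (∃ s : Set U, Dense s ∧ #s ≤ κ) ∧ ¬ (∃ s : Set U, Dense s ∧ #s < κ)

open Set Pointwise

section SmallDense

variable {α β : Type u} [TopologicalSpace α] [TopologicalSpace β] {κ : Cardinal.{u}}

def SmallDense (κ : Cardinal.{u}) (A : Set α) : Prop :=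
  ∃ s ⊆ A, A ⊆ closure s ∧ #s < κ

theorem smallDense_univ_of_dense {s : Set α} (hs : Dense s) (hsκ : #s < κ) :
    SmallDense κ (univ : Set α) :=
  ⟨s, subset_univ s, fun x _ => hs x, hsκ⟩

theorem SmallDense.exists_dense_subtype {A : Set α} (hA : SmallDense κ A) :
    ∃ s : Set A, Dense s ∧ #s < κ := by
  obtain ⟨s, hsA, hAs, hsκ⟩ := hA
  refine ⟨Subtype.val ⁻¹' s, ?_,
    (mk_preimage_of_injective _ _ Subtype.val_injective).trans_lt hsκ⟩
  rwa [Subtype.dense_iff, Subtype.image_preimage_coe, inter_eq_right.2 hsA]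

theorem SmallDense.image {A : Set α} (hA : SmallDense κ A) {f : α → β} (hf : Continuous f) :
    SmallDense κ (f '' A) := by
  obtain ⟨s, hsA, hAs, hsκ⟩ := hA
  exact ⟨f '' s, image_mono hsA, (image_mono hAs).trans (image_closure_subset_closure_image hf),
    mk_image_le.trans_lt hsκ⟩

theorem SmallDense.closure {A : Set α} (hA : SmallDense κ A) : SmallDense κ (closure A) := by
  obtain ⟨s, hsA, hAs, hsκ⟩ := hA
  exact ⟨s, hsA.trans subset_closure, closure_minimal hAs isClosed_closure, hsκ⟩

theorem SmallDense.iUnion (hκ : κ.IsRegular) {ι : Type u} (hι : #ι < κ) {A : ι → Set α}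
    (hA : ∀ i, SmallDense κ (A i)) : SmallDense κ (⋃ i, A i) := by
  choose s hsA hAs hsκ using hA
  exact ⟨⋃ i, s i, iUnion_mono hsA,
    iUnion_subset fun i => (hAs i).trans (closure_mono (subset_iUnion s i)),
    (card_iUnion_lt_iff_forall_of_isRegular hκ hι).2 hsκ⟩

theorem SmallDense.add [Add α] [ContinuousAdd α] (hκ : ℵ₀ ≤ κ) {A B : Set α}
    (hA : SmallDense κ A) (hB : SmallDense κ B) : SmallDense κ (A + B) := by
  obtain ⟨s, hsA, hAs, hsκ⟩ := hA
  obtain ⟨t, htB, hBt, htκ⟩ := hB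
  refine ⟨s + t, add_subset_add hsA htB, ?_, mk_add_le.trans_lt (mul_lt_of_lt hκ hsκ htκ)⟩
  rintro _ ⟨a, ha, b, hb, rfl⟩
  exact map_mem_closure₂ continuous_add (hAs ha) (hBt hb) fun x hx y hy => add_mem_add hx hy

theorem smallDense_span_singleton [AddCommGroup α] [Module ℝ α] [ContinuousSMul ℝ α]
    (hκ : ℵ₀ < κ) (x : α) : SmallDense κ (Submodule.span ℝ {x} : Set α) := by
  refine ⟨range fun q : ℚ => (q : ℝ) • x, ?_, ?_, (countable_range _).le_aleph0.trans_lt hκ⟩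
  · rintro _ ⟨q, rfl⟩
    exact Submodule.smul_mem _ _ (Submodule.mem_span_singleton_self x)
  · intro y hy
    obtain ⟨r, rfl⟩ := Submodule.mem_span_singleton.1 hy
    exact map_mem_closure (f := (· • x)) (continuous_id.smul continuous_const)
      (Rat.denseRange_cast r) (mapsTo_range_iff.2 fun q => ⟨q, rfl⟩)

end SmallDense

theorem exists_subset_range_of_mk_le {α ι : Type u} [Nonempty α] {s : Set α} (h : #s ≤ #ι) :
    ∃ f : ι → α, s ⊆ range f := by
  obtain ⟨e⟩ := h
  exact ⟨Function.extend e Subtype.val fun _ => Classical.arbitrary α, fun x hx =>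
    ⟨e ⟨x, hx⟩, e.injective.extend_apply _ _ _⟩⟩

theorem exists_monotone_of_isChain_sSup {L : Type u} [CompleteLattice L] {κ : Cardinal.{u}}
    (hκ : ℵ₀ ≤ κ) {ι : Type u} [LinearOrder ι] [WellFoundedLT ι]
    (hι : ∀ i : ι, #(Iio i) < κ) {P : L → Prop}
    (hP : ∀ S : Set L, S.Nonempty → IsChain (· ≤ ·) S → #S < κ → (∀ x ∈ S, P x) →
      P (sSup S))
    {R : ι → L → Prop} (hR : ∀ i x, P x → ∃ y, P y ∧ x ≤ y ∧ R i y)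
    (x₀ : L) (hx₀ : P x₀) :
    ∃ F : ι → L, Monotone F ∧ ∀ i, x₀ ≤ F i ∧ P (F i) ∧ R i (F i) := by
  classical
  -- Totalising `hR` lets `F` be defined before `P` is known to hold along it.
  have hR' : ∀ i x, ∃ y, x ≤ y ∧ (P x → P y ∧ R i y) := fun i x =>
    if hx : P x then (hR i x hx).imp fun _ hy => ⟨hy.2.1, fun _ => ⟨hy.1, hy.2.2⟩⟩
    else ⟨x, le_rfl, fun h => absurd h hx⟩
  choose step le_step step_spec using hR'
  let F : ι → L := WellFoundedLT.fix fun i F' =>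
    step i (sSup (insert x₀ (range fun j : Iio i => F' j j.2)))
  set below : ι → Set L := fun i => insert x₀ (range fun j : Iio i => F j)
  have hF : ∀ i, F i = step i (sSup (below i)) := WellFoundedLT.fix_eq _
  have le_F : ∀ i, ∀ x ∈ below i, x ≤ F i := fun i x hx =>
    (le_sSup hx).trans ((le_step _ _).trans_eq (hF i).symm)
  have hmono : Monotone F := monotone_iff_forall_lt.2 fun j i hji =>
    le_F i _ (mem_insert_of_mem _ ⟨⟨j, hji⟩, rfl⟩)
  have x₀_le : ∀ i, x₀ ≤ F i := fun i => le_F i _ (mem_insert _ _)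
  have hP_below : ∀ i, (∀ j < i, P (F j)) → P (sSup (below i)) := by
    intro i ih
    refine hP _ (insert_nonempty _ _) ?_ ?_ ?_
    · exact (hmono.comp (Subtype.mono_coe _)).isChain_range.insert
        fun _ ⟨j, hj⟩ _ => .inl (hj ▸ x₀_le j)
    · exact mk_insert_le.trans_lt <|
        add_lt_of_lt hκ (mk_range_le.trans_lt (hι i)) (one_lt_aleph0.trans_le hκ)
    · rintro _ (rfl | ⟨j, rfl⟩)
      exacts [hx₀, ih j j.2]
  have hPF : ∀ i, P (F i) := by
    intro i
    induction i using WellFoundedLT.induction with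
    | _ i ih => exact (hF i).symm ▸ (step_spec _ _ (hP_below i ih)).1
  exact ⟨F, hmono, fun i =>
    ⟨x₀_le i, hPF i, (hF i).symm ▸ (step_spec _ _ (hP_below i fun j _ => hPF j)).2⟩⟩

theorem Isometry.surjective_of_denseRange {α β : Type*} [PseudoEMetricSpace α]
    [CompleteSpace α] [EMetricSpace β] {f : α → β} (hf : Isometry f) (hd : DenseRange f) :
    Function.Surjective f :=
  range_eq_univ.1 <|
    hf.isUniformInducing.isComplete_range.isClosed.closure_eq ▸ hd.closure_range

section IsometricGraph

variable {U V : Type*} [NormedAddCommGroup U] [NormedSpace ℝ U]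
  [NormedAddCommGroup V] [NormedSpace ℝ V]

def IsIsometricGraph (G : Submodule ℝ (U × V)) : Prop :=
  ∀ p ∈ G, ‖p.1‖ = ‖p.2‖

namespace IsIsometricGraph

variable {G : Submodule ℝ (U × V)}

def fst (hG : IsIsometricGraph G) : G →ₗᵢ[ℝ] U :=
  ⟨(LinearMap.fst ℝ U V).comp G.subtype, fun p => by simp [Prod.norm_def, hG p p.2]⟩

def snd (hG : IsIsometricGraph G) : G →ₗᵢ[ℝ] V :=
  ⟨(LinearMap.snd ℝ U V).comp G.subtype, fun p => by simp [Prod.norm_def, hG p p.2]⟩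

theorem topologicalClosure (hG : IsIsometricGraph G) :
    IsIsometricGraph G.topologicalClosure := by
  intro p hp
  rw [← SetLike.mem_coe, Submodule.topologicalClosure_coe] at hp
  exact closure_minimal hG (isClosed_eq continuous_fst.norm continuous_snd.norm) hp

theorem sSup_of_directedOn {S : Set (Submodule ℝ (U × V))} (hne : S.Nonempty)
    (hdir : DirectedOn (· ≤ ·) S)
    (hS : ∀ G ∈ S, IsIsometricGraph G) : IsIsometricGraph (sSup S) := by
  intro p hp
  obtain ⟨G, hGS, hpG⟩ := (Submodule.mem_sSup_of_directed hne hdir).1 hp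
  exact hS G hGS p hpG

theorem exists_linearIsometryEquiv [CompleteSpace U] [CompleteSpace V]
    (hG : IsIsometricGraph G) (hfst : Dense (G.map (LinearMap.fst ℝ U V) : Set U))
    (hsnd : Dense (G.map (LinearMap.snd ℝ U V) : Set V)) :
    ∃ h : U ≃ₗᵢ[ℝ] V, ∀ p ∈ G, h p.1 = p.2 := by
  set C := G.topologicalClosure
  have hC := hG.topologicalClosure
  have : CompleteSpace C := G.isClosed_topologicalClosure.completeSpace_coe
  have hGC : ∀ p ∈ G, p ∈ C := fun p hp => G.le_topologicalClosure hp
  have hC_fst : Function.Surjective hC.fst := hC.fst.isometry.surjective_of_denseRange <|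
    hfst.mono <| by rintro _ ⟨p, hp, rfl⟩; exact ⟨⟨p, hGC p hp⟩, rfl⟩
  have hC_snd : Function.Surjective hC.snd := hC.snd.isometry.surjective_of_denseRange <|
    hsnd.mono <| by rintro _ ⟨p, hp, rfl⟩; exact ⟨⟨p, hGC p hp⟩, rfl⟩
  let e₁ := LinearIsometryEquiv.ofSurjective hC.fst hC_fst
  refine ⟨e₁.symm.trans (.ofSurjective hC.snd hC_snd), fun p hp => ?_⟩
  have : e₁.symm p.1 = ⟨p, hGC p hp⟩ := e₁.symm_apply_eq.2 rfl
  exact congrArg hC.snd this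

end IsIsometricGraph

end IsometricGraph

theorem UnivDispLT.exists_extension {V : Type u} [NormedAddCommGroup V] [NormedSpace ℝ V]
    {κ : Cardinal.{u}} (hV : UnivDispLT V κ) {E : Type u} [NormedAddCommGroup E]
    [NormedSpace ℝ E] {A T : Submodule ℝ E} (hAT : A ≤ T) [CompleteSpace T]
    (hT : ∃ s : Set T, Dense s ∧ #s < κ) (g : A →ₗᵢ[ℝ] V) :
    ∃ g' : T →ₗᵢ[ℝ] V, ∀ x : A, g' (Submodule.inclusion hAT x) = g x := by
  obtain ⟨g', hg'⟩ := hV T hT (A.comap T.subtype)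
    (g.comp ⟨(Submodule.comapSubtypeEquivOfLe hAT).toLinearMap, fun _ => rfl⟩)
  exact ⟨g', fun x => hg' ((Submodule.comapSubtypeEquivOfLe hAT).symm x)⟩

section SmallIsometricGraph

variable {U V : Type u} [NormedAddCommGroup U] [NormedSpace ℝ U]
  [NormedAddCommGroup V] [NormedSpace ℝ V] {κ : Cardinal.{u}}

structure IsSmallIsometricGraph (κ : Cardinal.{u}) (G : Submodule ℝ (U × V)) : Prop where
  isIsometricGraph : IsIsometricGraph G
  smallDense : SmallDense κ (G : Set (U × V))

theorem isSmallIsometricGraph_range_prod {E : Type u} [NormedAddCommGroup E] [NormedSpace ℝ E]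
    (i : E →ₗᵢ[ℝ] U) (g : E →ₗᵢ[ℝ] V) (hE : ∃ s : Set E, Dense s ∧ #s < κ) :
    IsSmallIsometricGraph κ (LinearMap.range (i.toLinearMap.prod g.toLinearMap)) := by
  obtain ⟨s, hs, hsκ⟩ := hE
  refine ⟨?_, ?_⟩
  · rintro _ ⟨x, rfl⟩
    simp
  · rw [LinearMap.coe_range, ← image_univ]
    exact (smallDense_univ_of_dense hs hsκ).image (i.continuous.prodMk g.continuous)

theorem IsSmallIsometricGraph.sSup_of_isChain (hκ : κ.IsRegular)
    {S : Set (Submodule ℝ (U × V))} (hne : S.Nonempty) (hchain : IsChain (· ≤ ·) S) (hSκ : #S < κ)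
    (hS : ∀ G ∈ S, IsSmallIsometricGraph κ G) : IsSmallIsometricGraph κ (sSup S) := by
  refine ⟨IsIsometricGraph.sSup_of_directedOn hne hchain.directedOn fun G hG => (hS G hG).1, ?_⟩
  have : ((sSup S : Submodule ℝ (U × V)) : Set (U × V)) = ⋃ G : S, (G : Set (U × V)) := by
    ext p
    simp [Submodule.mem_sSup_of_directed hne hchain.directedOn]
  rw [this]
  exact SmallDense.iUnion hκ hSκ fun G => (hS G G.2).2

theorem IsSmallIsometricGraph.exists_le_mem_map_fst [CompleteSpace U] (hκ : ℵ₀ < κ)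
    (hV : UnivDispLT V κ) {G : Submodule ℝ (U × V)} (hG : IsSmallIsometricGraph κ G) (u : U) :
    ∃ G', IsSmallIsometricGraph κ G' ∧ G ≤ G' ∧ u ∈ G'.map (LinearMap.fst ℝ U V) := by
  set A := LinearMap.range hG.1.fst.toLinearMap
  set T := (A ⊔ Submodule.span ℝ {u}).topologicalClosure
  have hAT : A ≤ T := le_sup_left.trans (Submodule.le_topologicalClosure _)
  have huT : u ∈ T := Submodule.le_topologicalClosure _
    (Submodule.mem_sup_right (Submodule.mem_span_singleton_self u))
  have : CompleteSpace T := (Submodule.isClosed_topologicalClosure _).completeSpace_coe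
  have hA : SmallDense κ (A : Set U) := by
    have : (A : Set U) = Prod.fst '' (G : Set (U × V)) := by ext; simp [A, IsIsometricGraph.fst]
    exact this ▸ hG.2.image continuous_fst
  have hT : SmallDense κ (T : Set U) := by
    rw [Submodule.topologicalClosure_coe, Submodule.coe_sup]
    exact (hA.add hκ.le (smallDense_span_singleton hκ u)).closure
  obtain ⟨g, hg⟩ := hV.exists_extension hAT hT.exists_dense_subtype
    (hG.1.snd.comp hG.1.fst.equivRange.symm.toLinearIsometry)
  refine ⟨_, isSmallIsometricGraph_range_prod T.subtypeₗᵢ g hT.exists_dense_subtype, ?_,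
    ⟨(u, g ⟨u, huT⟩), ⟨⟨u, huT⟩, rfl⟩, rfl⟩⟩
  intro p hp
  refine ⟨Submodule.inclusion hAT (hG.1.fst.equivRange ⟨p, hp⟩), Prod.ext rfl ?_⟩
  exact (hg _).trans (congrArg hG.1.snd (hG.1.fst.equivRange.symm_apply_apply _))

theorem IsSmallIsometricGraph.map_prodComm {G : Submodule ℝ (U × V)}
    (hG : IsSmallIsometricGraph κ G) :
    IsSmallIsometricGraph κ (G.map (LinearEquiv.prodComm ℝ U V).toLinearMap) := by
  refine ⟨fun p hp => ?_, ?_⟩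
  · obtain ⟨q, hq, rfl⟩ := hp
    exact (hG.1 q hq).symm
  · rw [Submodule.map_coe]
    exact hG.2.image continuous_swap

theorem IsSmallIsometricGraph.exists_le_mem_map_fst_mem_map_snd [CompleteSpace U]
    [CompleteSpace V] (hκ : ℵ₀ < κ) (hU : UnivDispLT U κ) (hV : UnivDispLT V κ)
    {G : Submodule ℝ (U × V)} (hG : IsSmallIsometricGraph κ G) (u : U) (v : V) :
    ∃ G', IsSmallIsometricGraph κ G' ∧ G ≤ G' ∧ u ∈ G'.map (LinearMap.fst ℝ U V) ∧
      v ∈ G'.map (LinearMap.snd ℝ U V) := by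
  obtain ⟨G₁, hG₁, hGG₁, hu⟩ := hG.exists_le_mem_map_fst hκ hV u
  obtain ⟨G₂, hG₂, hG₁G₂, q, hq, rfl⟩ := hG₁.map_prodComm.exists_le_mem_map_fst hκ hU v
  have hG₁G₂ : G₁ ≤ G₂.map (LinearEquiv.prodComm ℝ V U).toLinearMap := fun p hp =>
    ⟨p.swap, hG₁G₂ ⟨p, hp, rfl⟩, rfl⟩
  exact ⟨_, hG₂.map_prodComm, hGG₁.trans hG₁G₂, Submodule.map_mono hG₁G₂ hu,
    ⟨q.swap, ⟨q, hq, rfl⟩, rfl⟩⟩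

end SmallIsometricGraph

theorem univDisp_back_and_forth_general
    (κ : Cardinal.{u}) (hκ : Cardinal.aleph0 < κ) (hreg : κ.IsRegular)
    (U V : Type u)
    [NormedAddCommGroup U] [NormedSpace ℝ U] [CompleteSpace U]
    [NormedAddCommGroup V] [NormedSpace ℝ V] [CompleteSpace V]
    (hU : UnivDispLT U κ) (hV : UnivDispLT V κ)
    (hdU : DensityEq U κ) (hdV : DensityEq V κ)
    (X : Subspace ℝ U) (hX : ∃ s : Set X, Dense s ∧ #s < κ)
    (Y : Subspace ℝ V)
    (f : X ≃ₗᵢ[ℝ] Y) :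
    ∃ h : U ≃ₗᵢ[ℝ] V, ∀ x : X, h (x : U) = (f x : V) := by
  obtain ⟨su, hsu, hsuκ⟩ := hdU.1
  obtain ⟨sv, hsv, hsvκ⟩ := hdV.1
  obtain ⟨u, hu⟩ := exists_subset_range_of_mk_le (ι := κ.ord.ToType) (s := su)
    (by rwa [mk_toType, card_ord])
  obtain ⟨v, hv⟩ := exists_subset_range_of_mk_le (ι := κ.ord.ToType) (s := sv)
    (by rwa [mk_toType, card_ord])
  set G₀ := LinearMap.range
    (X.subtypeₗᵢ.toLinearMap.prod (Y.subtypeₗᵢ.comp f.toLinearIsometry).toLinearMap)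
  have hG₀ : IsSmallIsometricGraph κ G₀ := isSmallIsometricGraph_range_prod _ _ hX
  obtain ⟨F, hF_mono, hF⟩ := exists_monotone_of_isChain_sSup hreg.aleph0_le
    (fun i => by simpa using mk_Iio_lt i)
    (fun _ hne hchain hSκ hS => IsSmallIsometricGraph.sSup_of_isChain hreg hne hchain hSκ hS)
    (fun i _ hG => hG.exists_le_mem_map_fst_mem_map_snd hκ hU hV (u i) (v i)) G₀ hG₀
  obtain ⟨i₀⟩ : Nonempty κ.ord.ToType :=
    Ordinal.nonempty_toType_iff.2 (ord_eq_zero.not.2 (aleph0_pos.trans hκ).ne')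
  set D := sSup (range F)
  have hD : IsIsometricGraph D := IsIsometricGraph.sSup_of_directedOn ⟨F i₀, mem_range_self i₀⟩
    (directedOn_range.2 hF_mono.directed_le) (forall_mem_range.2 fun i => (hF i).2.1.1)
  have hF_le : ∀ i, F i ≤ D := fun i => le_sSup (mem_range_self i)
  obtain ⟨h, hh⟩ := hD.exists_linearIsometryEquiv
    (hsu.mono <| hu.trans <| range_subset_iff.2 fun i => Submodule.map_mono (hF_le i) (hF i).2.2.1)
    (hsv.mono <| hv.trans <| range_subset_iff.2 fun i => Submodule.map_mono (hF_le i) (hF i).2.2.2)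
  exact ⟨h, fun x => hh _ (hF_le i₀ ((hF i₀).1 ⟨x, rfl⟩))⟩

/-- **Uniqueness and homogeneity of spaces of universal disposition.** Let `κ` be a
regular uncountable cardinal and `U`, `V` Banach spaces of universal disposition for
Banach spaces of density `< κ`, each of density `κ`. Then every bijective linear isometry
between subspaces `X ⊆ U`, `Y ⊆ V` of density `< κ` extends to a bijective linear
isometry `h : U → V`. In particular `U` and `V` are linearly isometric. -/
theorem univDisp_back_and_forth
    (κ : Cardinal.{u}) (hκ : Cardinal.aleph0 < κ) (hreg : κ.IsRegular)
    (U V : Type u)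
    [NormedAddCommGroup U] [NormedSpace ℝ U] [CompleteSpace U]
    [NormedAddCommGroup V] [NormedSpace ℝ V] [CompleteSpace V]
    (hU : UnivDispLT U κ) (hV : UnivDispLT V κ)
    (hdU : DensityEq U κ) (hdV : DensityEq V κ)
    (X : Subspace ℝ U) (hX : ∃ s : Set X, Dense s ∧ #s < κ)
    (Y : Subspace ℝ V) (hY : ∃ s : Set Y, Dense s ∧ #s < κ)
    (f : X ≃ₗᵢ[ℝ] Y) :
    ∃ h : U ≃ₗᵢ[ℝ] V, ∀ x : X, h (x : U) = (f x : V) :=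
  univDisp_back_and_forth_general κ hκ hreg U V hU hV hdU hdV X hX Y f
end

section
/- Suppose E is a Banach space of universal disposition for finite-dimensional spaces (strong Gurarii) that admits a skeleton all of whose members are 1-complemented in E and isometric to the Gurarii space G. Then G is 1-injective for finite-dimensional spaces: for all finite-dimensional X ⊆ Y, every operator f : X → G of norm ≤ 1 extends to Y with norm ≤ 1. (Combined with the fact that G is not 1-injective for finite-dimensional spaces, no such skeleton can exist.) -/
/-! A strong Gurarii space `E` is itself 1-injective for finite-dimensional spaces: for a
contraction `φ : X → E` on a subspace of a finite-dimensional `Y`, the pushout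
`(Y ⊕₁ Z) / {(x, -φ x)}`, with `Z` a copy of `φ(X)`, contains `Z` isometrically and receives `Y`
contractively, and universal disposition embeds it isometrically into `E` over `Z`.
1-injectivity then passes to every space onto which `E` retracts with norm one, such as a member
`F ≅ G` of the skeleton through its norm-one projection. -/

universe u v w

/-- A Banach space `E` is of *universal disposition for finite-dimensional spaces*
(a strong Gurarii space) if every isometric embedding into `E` of a finite-dimensional
subspace of a finite-dimensional space extends to an isometric embedding of the whole
space. -/
def IsStrongGurarii (E : Type v) [NormedAddCommGroup E] [NormedSpace ℝ E] : Prop :=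
  ∀ (F₀ : Type u) [NormedAddCommGroup F₀] [NormedSpace ℝ F₀] [FiniteDimensional ℝ F₀],
    ∀ (E₀ : Subspace ℝ F₀) (f : E₀ →ₗᵢ[ℝ] E),
      ∃ g : F₀ →ₗᵢ[ℝ] E, ∀ x : E₀, g (x : F₀) = f x

def IsOneInjectiveFinDim (G : Type w) [NormedAddCommGroup G] [NormedSpace ℝ G] : Prop :=
  ∀ (Y : Type u) [NormedAddCommGroup Y] [NormedSpace ℝ Y] [FiniteDimensional ℝ Y],
    ∀ (X : Subspace ℝ Y) (f : X →L[ℝ] G), ‖f‖ ≤ 1 →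
      ∃ g : Y →L[ℝ] G, (∀ x : X, g (x : Y) = f x) ∧ ‖g‖ ≤ 1

namespace LinearMap

variable {V : Type u} {E : Type v} [AddCommGroup V] [Module ℝ V]
  [NormedAddCommGroup E] [NormedSpace ℝ E] (φ : V →ₗ[ℝ] E)

/-- `V ⧸ ker φ`, normed through the injection it induces into `E`; unlike `range φ` it lives in
the universe of `V`. -/
def NormedCoimage : Type u := V ⧸ ker φ

instance : AddCommGroup φ.NormedCoimage := inferInstanceAs (AddCommGroup (V ⧸ ker φ))

instance : Module ℝ φ.NormedCoimage := inferInstanceAs (Module ℝ (V ⧸ ker φ))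

instance [Module.Finite ℝ V] : Module.Finite ℝ φ.NormedCoimage :=
  inferInstanceAs (Module.Finite ℝ (V ⧸ ker φ))

def normedCoimageLift : φ.NormedCoimage →ₗ[ℝ] E := (ker φ).liftQ φ le_rfl

noncomputable instance : NormedAddCommGroup φ.NormedCoimage :=
  NormedAddCommGroup.induced _ E φ.normedCoimageLift <| ker_eq_bot.mp <|
    (ker φ).ker_liftQ_eq_bot φ le_rfl le_rfl

noncomputable instance : NormedSpace ℝ φ.NormedCoimage :=
  NormedSpace.induced ℝ _ E φ.normedCoimageLift

def toNormedCoimage : V →ₗ[ℝ] φ.NormedCoimage := (ker φ).mkQ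

def normedCoimageIsometry : φ.NormedCoimage →ₗᵢ[ℝ] E := ⟨φ.normedCoimageLift, fun _ => rfl⟩

@[simp]
theorem normedCoimageIsometry_toNormedCoimage (x : V) :
    φ.normedCoimageIsometry (φ.toNormedCoimage x) = φ x := rfl

end LinearMap

section

variable {Y Z : Type*} [SeminormedAddCommGroup Y] [NormedSpace ℝ Y]
  [SeminormedAddCommGroup Z] [NormedSpace ℝ Z] (X : Submodule ℝ Y) (q : X →ₗ[ℝ] Z)

def pushoutRel : Submodule ℝ (WithLp 1 (Y × Z)) :=
  LinearMap.range ((WithLp.linearEquiv 1 ℝ (Y × Z)).symm.toLinearMap ∘ₗ X.subtype.prod (-q))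

abbrev NormedPushout := WithLp 1 (Y × Z) ⧸ pushoutRel X q

namespace NormedPushout

def inl : Y →ₗ[ℝ] NormedPushout X q :=
  (pushoutRel X q).mkQ ∘ₗ (WithLp.linearEquiv 1 ℝ (Y × Z)).symm.toLinearMap ∘ₗ LinearMap.inl ℝ Y Z

def inr : Z →ₗ[ℝ] NormedPushout X q :=
  (pushoutRel X q).mkQ ∘ₗ (WithLp.linearEquiv 1 ℝ (Y × Z)).symm.toLinearMap ∘ₗ LinearMap.inr ℝ Y Z

theorem inl_coe_eq_inr (x : X) : inl X q x = inr X q (q x) := by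
  refine (Submodule.Quotient.eq _).mpr ⟨x, ?_⟩
  rw [sub_eq_add_neg, ← WithLp.toLp_neg, ← WithLp.toLp_add]
  simp

theorem norm_inl_le (y : Y) : ‖inl X q y‖ ≤ ‖y‖ :=
  (Submodule.Quotient.norm_mk_le _ _).trans_eq <| by simp

theorem norm_inr (hq : ∀ x, ‖q x‖ ≤ ‖x‖) (z : Z) : ‖inr X q z‖ = ‖z‖ := by
  refine le_antisymm ((Submodule.Quotient.norm_mk_le _ _).trans_eq ?_) ?_
  · simp
  · refine QuotientAddGroup.le_norm_iff.mpr fun w hw => ?_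
    obtain ⟨x, hx⟩ := (Submodule.Quotient.eq _).mp hw
    have hw' : w = WithLp.toLp 1 ((x : Y), z - q x) := by
      rw [eq_sub_iff_add_eq'] at hx
      rw [← hx]
      simp [← WithLp.toLp_add, sub_eq_add_neg]
    calc ‖z‖ ≤ ‖q x‖ + ‖z - q x‖ := norm_le_insert' _ _
      _ ≤ ‖x‖ + ‖z - q x‖ := by gcongr; exact hq x
      _ = ‖w‖ := by simp [hw', WithLp.prod_norm_eq_of_L1]

end NormedPushout

end

theorem IsStrongGurarii.isOneInjectiveFinDim {E : Type v} [NormedAddCommGroup E]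
    [NormedSpace ℝ E] (hE : IsStrongGurarii.{u} E) : IsOneInjectiveFinDim.{u} E := by
  intro Y _ _ _ X φ hφ
  set q := (φ : X →ₗ[ℝ] E).toNormedCoimage
  have hq (x : X) : ‖q x‖ ≤ ‖x‖ :=
    calc ‖q x‖ = ‖φ x‖ := (φ : X →ₗ[ℝ] E).normedCoimageIsometry.norm_map (q x)
      _ ≤ ‖x‖ := (φ.le_of_opNorm_le hφ x).trans_eq (one_mul _)
  -- makes the pushout Hausdorff, hence a normed space
  have := (pushoutRel X q).closed_of_finiteDimensional
  let j : _ →ₗᵢ[ℝ] NormedPushout X q := ⟨NormedPushout.inr X q, NormedPushout.norm_inr X q hq⟩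
  obtain ⟨g, hg⟩ := hE (NormedPushout X q) (LinearMap.range j.toLinearMap)
    ((φ : X →ₗ[ℝ] E).normedCoimageIsometry.comp j.equivRange.symm.toLinearIsometry)
  let i : Y →L[ℝ] NormedPushout X q :=
    (NormedPushout.inl X q).mkContinuous 1 fun y => by simpa using NormedPushout.norm_inl_le X q y
  refine ⟨g.toContinuousLinearMap ∘L i, fun x => ?_, ?_⟩
  · have hx := hg (j.equivRange (q x))
    rw [LinearIsometry.equivRange_apply_coe] at hx
    simpa [i, j, q, NormedPushout.inl_coe_eq_inr] using hx
  · grw [ContinuousLinearMap.opNorm_comp_le, g.norm_toContinuousLinearMap_le, one_mul]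
    exact LinearMap.mkContinuous_norm_le _ zero_le_one _

theorem IsOneInjectiveFinDim.of_retraction {E : Type v} [NormedAddCommGroup E] [NormedSpace ℝ E]
    {G : Type w} [NormedAddCommGroup G] [NormedSpace ℝ G] (hE : IsOneInjectiveFinDim.{u} E)
    (i : G →ₗᵢ[ℝ] E) (r : E →L[ℝ] G) (hr : ‖r‖ ≤ 1) (hri : ∀ z, r (i z) = z) :
    IsOneInjectiveFinDim.{u} G := by
  intro Y _ _ _ X f hf
  obtain ⟨Φ, hΦf, hΦ⟩ := hE Y X (i.toContinuousLinearMap ∘L f) <| by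
    grw [ContinuousLinearMap.opNorm_comp_le, i.norm_toContinuousLinearMap_le, hf, one_mul]
  refine ⟨r ∘L Φ, fun x => ?_, ?_⟩
  · simp [hΦf, hri]
  · grw [ContinuousLinearMap.opNorm_comp_le, hr, hΦ, one_mul]

theorem IsSkeleton.nonempty {X : Type*} [NormedAddCommGroup X] [NormedSpace ℝ X]
    {𝔉 : Set (Subspace ℝ X)} (h𝔉 : IsSkeleton 𝔉) : 𝔉.Nonempty := by
  have h0 : (0 : X) ∈ ⋃ F ∈ 𝔉, (F : Set X) := h𝔉.2.1 ▸ Set.mem_univ _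
  obtain ⟨F, hF, -⟩ := Set.mem_iUnion₂.mp h0
  exact ⟨F, hF⟩

theorem strongGurarii_skeleton_one_complemented_general
    {E : Type v} [NormedAddCommGroup E] [NormedSpace ℝ E]
    (hE : IsStrongGurarii.{u} E)
    (G : Type w) [NormedAddCommGroup G] [NormedSpace ℝ G]
    (𝔉 : Set (Subspace ℝ E)) (hskel : IsSkeleton 𝔉)
    (hiso : ∀ F ∈ 𝔉, Nonempty (F ≃ₗᵢ[ℝ] G))
    (hcompl : ∀ F ∈ 𝔉, ∃ P : E →L[ℝ] E, ‖P‖ ≤ 1 ∧ (∀ x : E, P x ∈ F) ∧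
      ∀ x ∈ F, P x = x) :
    ∀ (Y : Type u) [NormedAddCommGroup Y] [NormedSpace ℝ Y] [FiniteDimensional ℝ Y],
      ∀ (X : Subspace ℝ Y) (f : X →L[ℝ] G), ‖f‖ ≤ 1 →
        ∃ g : Y →L[ℝ] G, (∀ x : X, g (x : Y) = f x) ∧ ‖g‖ ≤ 1 := by
  obtain ⟨F, hF⟩ := hskel.nonempty
  obtain ⟨e⟩ := hiso F hF
  obtain ⟨P, hP, hPF, hPid⟩ := hcompl F hF
  have hPF_norm : ‖P.codRestrict F hPF‖ ≤ 1 :=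
    (P.codRestrict F hPF).opNorm_le_bound zero_le_one fun x => P.le_of_opNorm_le hP x
  refine hE.isOneInjectiveFinDim.of_retraction (F.subtypeₗᵢ.comp e.symm.toLinearIsometry)
    (e.toLinearIsometry.toContinuousLinearMap ∘L P.codRestrict F hPF) ?_ fun z => ?_
  · grw [ContinuousLinearMap.opNorm_comp_le, e.toLinearIsometry.norm_toContinuousLinearMap_le,
      hPF_norm, one_mul]
  · have hfix : P.codRestrict F hPF (e.symm z : E) = e.symm z := Subtype.ext (hPid _ (e.symm z).2)
    simp [hfix]

/-- **Strong Gurarii spaces and 1-complemented skeletons.** If a strong Gurarii space `E`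
admits a skeleton whose members are 1-complemented in `E` and isometric to the Gurarii
space `G`, then `G` is 1-injective for finite-dimensional spaces: every norm-`≤ 1`
operator from a subspace of a finite-dimensional space into `G` extends with norm `≤ 1`.
(Combined with the fact that the Gurarii space is not 1-injective for finite-dimensional
spaces, such a skeleton cannot exist.) -/
theorem strongGurarii_skeleton_one_complemented
    {E : Type v} [NormedAddCommGroup E] [NormedSpace ℝ E] [CompleteSpace E]
    (hE : IsStrongGurarii.{u} E)
    (G : Type w) [NormedAddCommGroup G] [NormedSpace ℝ G] [CompleteSpace G]
    (𝔉 : Set (Subspace ℝ E)) (hskel : IsSkeleton 𝔉)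
    (hiso : ∀ F ∈ 𝔉, Nonempty (F ≃ₗᵢ[ℝ] G))
    (hcompl : ∀ F ∈ 𝔉, ∃ P : E →L[ℝ] E, ‖P‖ ≤ 1 ∧ (∀ x : E, P x ∈ F) ∧
      ∀ x ∈ F, P x = x) :
    ∀ (Y : Type u) [NormedAddCommGroup Y] [NormedSpace ℝ Y] [FiniteDimensional ℝ Y],
      ∀ (X : Subspace ℝ Y) (f : X →L[ℝ] G), ‖f‖ ≤ 1 →
        ∃ g : Y →L[ℝ] G, (∀ x : X, g (x : Y) = f x) ∧ ‖g‖ ≤ 1 :=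
  strongGurarii_skeleton_one_complemented_general hE G 𝔉 hskel hiso hcompl
end

section
/- Every point of the unit sphere of a separable transitive Banach space is smooth. Consequently, a separable Banach space of universal disposition for finite-dimensional spaces cannot exist: transitivity (derived from universal disposition) would force all points of the unit sphere to be smooth, contradicting the existence of an isometrically embedded subspace with a non-smooth point. -/
/-!
Write `D(x, h)` for the right derivative of `t ↦ ‖x + t • h‖` at `0`. It is upper
semicontinuous in `x`, so `{x | D(x, h) + D(x, -h) < c}` is open; it is also dense, since the gap
cannot stay `≥ c > 0` along a segment. By Baire, a generic `x` has zero gap in every direction of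
a dense sequence, hence (`D(x, ·)` being `1`-Lipschitz) in every direction; then every norming
functional of `x` equals `D(x, ·)`, and `x / ‖x‖` is a smooth point (Mazur). Transitivity carries
it to every point of the sphere. In a strong Gurarii space, the isometric embedding of
`span {(1, 1)} ⊆ ℓ∞²` sending `(1, 1)` to a smooth point `p` extends to `ℓ∞²`; but then the
images of `(1, 0)` and `(0, 1)` have norming functionals which both norm `p` and take the values
`1` and `-1` at the image of `(1, -1)`.
-/

universe u v

open Set Filter

section NormDirDeriv

variable {E : Type*} [SeminormedAddCommGroup E] [NormedSpace ℝ E]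

noncomputable def normSlope (x h : E) (t : ℝ) : ℝ := (‖x + t • h‖ - ‖x‖) / t

/-- The right directional derivative of the norm at `x` in direction `h`: by convexity of
`t ↦ ‖x + t • h‖` the slopes decrease as `t ↓ 0`, so their infimum is their limit. -/
noncomputable def normDirDeriv (x h : E) : ℝ := ⨅ t : Ioi (0 : ℝ), normSlope x h t

lemma abs_normSlope_le (x h : E) {t : ℝ} (ht : 0 < t) : |normSlope x h t| ≤ ‖h‖ := by
  rw [normSlope, abs_div, abs_of_pos ht, div_le_iff₀ ht]
  calc |‖x + t • h‖ - ‖x‖| ≤ ‖x + t • h - x‖ := abs_norm_sub_norm_le _ _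
    _ = ‖h‖ * t := by rw [add_sub_cancel_left, norm_smul, Real.norm_of_nonneg ht.le, mul_comm]

lemma bddBelow_range_normSlope (x h : E) :
    BddBelow (range fun t : Ioi (0 : ℝ) => normSlope x h t) :=
  ⟨-‖h‖, by rintro _ ⟨t, rfl⟩; exact (abs_le.1 (abs_normSlope_le x h t.2)).1⟩

lemma normDirDeriv_le_normSlope (x h : E) {t : ℝ} (ht : 0 < t) :
    normDirDeriv x h ≤ normSlope x h t :=
  ciInf_le (bddBelow_range_normSlope x h) ⟨t, ht⟩

lemma le_normDirDeriv {x h : E} {c : ℝ} (H : ∀ t, 0 < t → c ≤ normSlope x h t) :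
    c ≤ normDirDeriv x h :=
  le_ciInf fun t => H t.1 t.2

lemma abs_normDirDeriv_le (x h : E) : |normDirDeriv x h| ≤ ‖h‖ :=
  abs_le.2 ⟨le_normDirDeriv fun _ ht => (abs_le.1 (abs_normSlope_le x h ht)).1,
    (normDirDeriv_le_normSlope x h one_pos).trans (abs_le.1 (abs_normSlope_le x h one_pos)).2⟩

lemma normSlope_smul (x h : E) {c : ℝ} (hc : 0 < c) (t : ℝ) :
    normSlope (c • x) h (c * t) = normSlope x h t := by
  rw [normSlope, normSlope, mul_smul, ← smul_add, norm_smul, norm_smul,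
    Real.norm_of_nonneg hc.le, ← mul_sub, mul_div_mul_left _ _ hc.ne']

lemma normDirDeriv_smul_le (x h : E) {c : ℝ} (hc : 0 < c) :
    normDirDeriv (c • x) h ≤ normDirDeriv x h :=
  le_normDirDeriv fun t ht =>
    normSlope_smul x h hc t ▸ normDirDeriv_le_normSlope _ _ (mul_pos hc ht)

lemma normDirDeriv_smul (x h : E) {c : ℝ} (hc : 0 < c) :
    normDirDeriv (c • x) h = normDirDeriv x h := by
  refine (normDirDeriv_smul_le x h hc).antisymm ?_
  simpa [smul_smul, inv_mul_cancel₀ hc.ne'] using normDirDeriv_smul_le (c • x) h (inv_pos.2 hc)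

lemma normDirDeriv_le_add_norm_sub (x h h' : E) :
    normDirDeriv x h ≤ normDirDeriv x h' + ‖h - h'‖ := by
  rw [← sub_le_iff_le_add]
  refine le_normDirDeriv fun t ht => ?_
  have : ‖x + t • h‖ ≤ ‖x + t • h'‖ + t * ‖h - h'‖ := by
    calc ‖x + t • h‖ = ‖(x + t • h') + t • (h - h')‖ := by rw [smul_sub]; abel_nf
      _ ≤ ‖x + t • h'‖ + t * ‖h - h'‖ := by
        grw [norm_add_le, norm_smul, Real.norm_of_nonneg ht.le]
  have hle : normSlope x h t ≤ normSlope x h' t + ‖h - h'‖ := by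
    rw [normSlope, normSlope, div_add' _ _ _ ht.ne', div_le_div_iff_of_pos_right ht]
    linarith
  linarith [normDirDeriv_le_normSlope x h ht]

lemma lipschitzWith_normDirDeriv (x : E) : LipschitzWith 1 (normDirDeriv x) :=
  LipschitzWith.of_le_add fun h h' => by
    simpa [dist_eq_norm] using normDirDeriv_le_add_norm_sub x h h'

lemma upperSemicontinuous_normDirDeriv (h : E) :
    UpperSemicontinuous fun x => normDirDeriv x h :=
  upperSemicontinuous_ciInf (fun x => bddBelow_range_normSlope x h) fun t =>
    (by unfold normSlope; fun_prop : Continuous fun x : E => normSlope x h t)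
      |>.upperSemicontinuous

lemma normDirDeriv_add_normDirDeriv_add_smul_neg_nonpos (x h : E) {s : ℝ} (hs : 0 < s) :
    normDirDeriv x h + normDirDeriv (x + s • h) (-h) ≤ 0 := by
  have : normSlope x h s + normSlope (x + s • h) (-h) s = 0 := by
    rw [normSlope, normSlope, smul_neg, add_neg_cancel_right, ← add_div]
    ring_nf
  linarith [normDirDeriv_le_normSlope x h hs, normDirDeriv_le_normSlope (x + s • h) (-h) hs]

lemma ContinuousLinearMap.apply_le_normDirDeriv {φ : E →L[ℝ] ℝ} (hφ : ‖φ‖ ≤ 1) {x : E}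
    (hφx : φ x = ‖x‖) (h : E) : φ h ≤ normDirDeriv x h :=
  le_normDirDeriv fun t ht => by
    rw [normSlope, le_div_iff₀ ht, ← hφx, mul_comm, ← smul_eq_mul, ← map_smul,
      le_sub_iff_add_le', ← map_add]
    exact (le_abs_self _).trans ((φ.le_opNorm _).trans (mul_le_of_le_one_left (norm_nonneg _) hφ))

lemma add_succ_mul_le_of_forall_add_le {f : ℝ → ℝ} {c δ₀ : ℝ}
    (hf : ∀ t t', 0 ≤ t → t < t' → t' ≤ δ₀ → f t + c ≤ f t') (n : ℕ) {δ : ℝ} (hδ : 0 < δ)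
    (hδ₀ : δ ≤ δ₀) : f 0 + (n + 1) * c ≤ f δ := by
  induction n generalizing δ with
  | zero => simpa using hf 0 δ le_rfl hδ hδ₀
  | succ n ih =>
    have h₁ := ih (half_pos hδ) (by linarith)
    have h₂ := hf (δ / 2) δ (by positivity) (half_lt_self hδ) hδ₀
    push_cast
    linarith

/-- Where `D(·, h) + D(·, -h) ≥ c` along a segment in direction `h`, the right derivative
`D(·, h)` jumps by at least `c` between any two points of the segment; as it is bounded by
`‖h‖`, this cannot persist along a whole segment. -/
lemma exists_mem_Icc_normDirDeriv_add_lt (x h : E) {c δ : ℝ} (hc : 0 < c) (hδ : 0 < δ) :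
    ∃ t ∈ Icc 0 δ, normDirDeriv (x + t • h) h + normDirDeriv (x + t • h) (-h) < c := by
  by_contra! H
  have jump : ∀ t t', 0 ≤ t → t < t' → t' ≤ δ →
      normDirDeriv (x + t • h) h + c ≤ normDirDeriv (x + t' • h) h := by
    intro t t' ht htt' ht'
    have step := normDirDeriv_add_normDirDeriv_add_smul_neg_nonpos (x + t • h) h
      (sub_pos.2 htt')
    rw [add_assoc, ← add_smul, add_sub_cancel] at step
    linarith [H t' ⟨ht.trans htt'.le, ht'⟩]
  obtain ⟨n, hn⟩ := exists_nat_gt (2 * ‖h‖ / c)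
  have chain := add_succ_mul_le_of_forall_add_le jump n hδ le_rfl
  rw [zero_smul, add_zero] at chain
  have hn' : 2 * ‖h‖ < (n + 1) * c := by
    rw [div_lt_iff₀ hc] at hn
    nlinarith
  linarith [abs_le.1 (abs_normDirDeriv_le x h), abs_le.1 (abs_normDirDeriv_le (x + δ • h) h)]

lemma dense_setOf_normDirDeriv_add_lt (h : E) {c : ℝ} (hc : 0 < c) :
    Dense {x : E | normDirDeriv x h + normDirDeriv x (-h) < c} := by
  refine Metric.dense_iff.2 fun x r hr => ?_
  have hδ : 0 < r / (‖h‖ + 1) := by positivity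
  obtain ⟨t, ⟨ht₀, htδ⟩, ht⟩ := exists_mem_Icc_normDirDeriv_add_lt x h hc hδ
  refine ⟨x + t • h, ?_, ht⟩
  rw [Metric.mem_ball, dist_self_add_left, norm_smul, Real.norm_of_nonneg ht₀]
  calc t * ‖h‖ ≤ r / (‖h‖ + 1) * ‖h‖ := by gcongr
    _ < r := by rw [div_mul_eq_mul_div, div_lt_iff₀ (by positivity)]; nlinarith

lemma isOpen_setOf_normDirDeriv_add_lt (h : E) (c : ℝ) :
    IsOpen {x : E | normDirDeriv x h + normDirDeriv x (-h) < c} :=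
  upperSemicontinuous_iff_isOpen_preimage.1
    ((upperSemicontinuous_normDirDeriv h).add (upperSemicontinuous_normDirDeriv (-h))) c

lemma eventually_residual_normDirDeriv_add_nonpos [CompleteSpace E] (h : E) :
    ∀ᶠ x in residual E, normDirDeriv x h + normDirDeriv x (-h) ≤ 0 := by
  have hlt : ∀ n : ℕ, ∀ᶠ x in residual E,
      normDirDeriv x h + normDirDeriv x (-h) < 1 / ((n : ℝ) + 1) := fun n =>
    residual_of_dense_open (isOpen_setOf_normDirDeriv_add_lt h _)
      (dense_setOf_normDirDeriv_add_lt h Nat.one_div_pos_of_nat)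
  filter_upwards [eventually_countable_forall.2 hlt] with x hx
  by_contra! hpos
  obtain ⟨n, hn⟩ := exists_nat_one_div_lt hpos
  exact (hx n).not_gt hn

lemma eventually_residual_forall_normDirDeriv_add_nonpos [CompleteSpace E]
    [TopologicalSpace.SeparableSpace E] :
    ∀ᶠ x in residual E, ∀ h, normDirDeriv x h + normDirDeriv x (-h) ≤ 0 := by
  filter_upwards [eventually_countable_forall.2 fun n =>
    eventually_residual_normDirDeriv_add_nonpos (TopologicalSpace.denseSeq E n)] with x hx h
  have hcont : Continuous fun h => normDirDeriv x h + normDirDeriv x (-h) :=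
    (lipschitzWith_normDirDeriv x).continuous.add
      ((lipschitzWith_normDirDeriv x).continuous.comp continuous_neg)
  exact (TopologicalSpace.denseRange_denseSeq E).induction_on h
    (isClosed_le hcont continuous_const) hx

end NormDirDeriv

section SmoothPoint

variable {E F : Type*} [NormedAddCommGroup E] [NormedSpace ℝ E] [NormedAddCommGroup F]
  [NormedSpace ℝ F]

def IsSmoothPoint (p : E) : Prop := ∃! φ : E →L[ℝ] ℝ, ‖φ‖ = 1 ∧ φ p = 1

lemma ContinuousLinearMap.apply_le_one {φ : E →L[ℝ] ℝ} (hφ : ‖φ‖ = 1) {v : E} (hv : ‖v‖ ≤ 1) :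
    φ v ≤ 1 :=
  (le_abs_self _).trans ((φ.le_opNorm v).trans (by rw [hφ, one_mul]; exact hv))

lemma exists_norm_eq_one_apply_eq_one {a : E} (ha : ‖a‖ = 1) :
    ∃ φ : E →L[ℝ] ℝ, ‖φ‖ = 1 ∧ φ a = 1 := by
  obtain ⟨φ, hφ, hφa⟩ := exists_dual_vector ℝ a (norm_ne_zero_iff.1 (by simp [ha]))
  exact ⟨φ, hφ, by simpa [ha] using hφa⟩

lemma isSmoothPoint_of_forall_normDirDeriv_add_nonpos {p : E} (hp : ‖p‖ = 1)
    (H : ∀ h, normDirDeriv p h + normDirDeriv p (-h) ≤ 0) : IsSmoothPoint p := by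
  obtain ⟨φ, hφ, hφp⟩ := exists_norm_eq_one_apply_eq_one hp
  have eq_normDirDeriv : ∀ χ : E →L[ℝ] ℝ, ‖χ‖ = 1 → χ p = 1 → ∀ h, χ h = normDirDeriv p h := by
    intro χ hχ hχp h
    have h₁ := χ.apply_le_normDirDeriv hχ.le (hχp.trans hp.symm) h
    have h₂ := χ.apply_le_normDirDeriv hχ.le (hχp.trans hp.symm) (-h)
    rw [map_neg] at h₂
    linarith [H h]
  refine ⟨φ, ⟨hφ, hφp⟩, fun ψ ⟨hψ, hψp⟩ => ?_⟩
  ext h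
  rw [eq_normDirDeriv ψ hψ hψp, eq_normDirDeriv φ hφ hφp]

theorem exists_isSmoothPoint [Nontrivial E] [CompleteSpace E] [TopologicalSpace.SeparableSpace E] :
    ∃ p : E, ‖p‖ = 1 ∧ IsSmoothPoint p := by
  have hne : ∀ᶠ x in residual E, x ≠ 0 :=
    residual_of_dense_open isOpen_compl_singleton (dense_compl_singleton 0)
  obtain ⟨x, hx, hx0⟩ :=
    (dense_of_mem_residual (eventually_residual_forall_normDirDeriv_add_nonpos.and hne)).nonempty
  have hinv : 0 < ‖x‖⁻¹ := inv_pos.2 (norm_pos_iff.2 hx0)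
  refine ⟨‖x‖⁻¹ • x, norm_smul_inv_norm hx0,
    isSmoothPoint_of_forall_normDirDeriv_add_nonpos (norm_smul_inv_norm hx0) fun h => ?_⟩
  rw [normDirDeriv_smul _ _ hinv, normDirDeriv_smul _ _ hinv]
  exact hx h

lemma IsSmoothPoint.map {p : E} (hp : IsSmoothPoint p) (e : E ≃ₗᵢ[ℝ] F) :
    IsSmoothPoint (e p) := by
  obtain ⟨φ, ⟨hφ, hφp⟩, huniq⟩ := hp
  refine ⟨φ.comp (e.symm : F →L[ℝ] E),
    ⟨by rw [φ.opNorm_comp_linearIsometryEquiv, hφ], by simpa using hφp⟩, fun ψ ⟨hψ, hψp⟩ => ?_⟩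
  have hψφ := huniq (ψ.comp (e : E →L[ℝ] F))
    ⟨by rw [ψ.opNorm_comp_linearIsometryEquiv, hψ], by simpa using hψp⟩
  ext y
  simpa using congr($hψφ (e.symm y))

lemma not_isSmoothPoint_add {a b : E} (ha : ‖a‖ = 1) (hb : ‖b‖ = 1) (hadd : ‖a + b‖ ≤ 1)
    (hsub : ‖a - b‖ ≤ 1) : ¬ IsSmoothPoint (a + b) := by
  rintro ⟨φ, -, huniq⟩
  obtain ⟨χa, hχa, hχaa⟩ := exists_norm_eq_one_apply_eq_one ha
  obtain ⟨χb, hχb, hχbb⟩ := exists_norm_eq_one_apply_eq_one hb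
  have hsum_a : χa (a + b) + χa (a - b) = 2 := by
    rw [← map_add, add_add_sub_cancel, ← two_smul ℝ, map_smul, hχaa, smul_eq_mul, mul_one]
  have hsum_b : χb (a + b) - χb (a - b) = 2 := by
    rw [← map_sub, add_sub_sub_cancel, ← two_smul ℝ, map_smul, hχbb, smul_eq_mul, mul_one]
  have hχb_neg : -χb (a - b) ≤ 1 := by
    rw [← map_neg]; exact χb.apply_le_one hχb (by rwa [norm_neg])
  have ha₁ := χa.apply_le_one hχa hadd
  have ha₂ := χa.apply_le_one hχa hsub
  have hb₁ := χb.apply_le_one hχb hadd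
  have hχ : χa = χb := (huniq χa ⟨hχa, by linarith⟩).trans (huniq χb ⟨hχb, by linarith⟩).symm
  have := congr($hχ (a - b))
  linarith

end SmoothPoint

section StrongGurarii

variable {X : Type v} [NormedAddCommGroup X] [NormedSpace ℝ X]

lemma IsStrongGurarii.exists_linearIsometry_apply_eq (hX : IsStrongGurarii.{u} X) {F : Type u}
    [NormedAddCommGroup F] [NormedSpace ℝ F] [FiniteDimensional ℝ F] {d : F} (hd : ‖d‖ = 1)
    {p : X} (hp : ‖p‖ = 1) : ∃ g : F →ₗᵢ[ℝ] X, g d = p := by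
  obtain ⟨g, hg⟩ := hX F (ℝ ∙ d) ((LinearIsometry.toSpanSingleton ℝ X hp).comp
    (LinearIsometryEquiv.toSpanUnitSingleton d hd).symm.toLinearIsometry)
  refine ⟨g, ?_⟩
  have hsymm : (LinearIsometryEquiv.toSpanUnitSingleton d hd).symm
      ⟨d, Submodule.mem_span_singleton_self d⟩ = (1 : ℝ) := by
    rw [LinearIsometryEquiv.symm_apply_eq, LinearIsometryEquiv.toSpanUnitSingleton_apply]
    simp
  simpa [hsymm] using hg ⟨d, Submodule.mem_span_singleton_self d⟩

lemma IsStrongGurarii.nontrivial (hX : IsStrongGurarii.{u} X) : Nontrivial X := by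
  obtain ⟨g, -⟩ := hX (ULift.{u} ℝ) ⊥
    { toLinearMap := 0
      norm_map' := fun x => by simp [Subsingleton.elim x 0] }
  exact g.injective.nontrivial

end StrongGurarii

/-- **No separable strong Gurarii spaces.** Every point of the unit sphere of a separable
transitive Banach space is smooth (admits exactly one norming functional); consequently
no separable Banach space can be a strong Gurarii space, since transitivity (which
follows from universal disposition) would make all points of the unit sphere smooth,
contradicting the existence of isometric copies of spaces with non-smooth points. -/
theorem no_separable_strong_gurarii
    (X : Type v) [NormedAddCommGroup X] [NormedSpace ℝ X] [CompleteSpace X]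
    [TopologicalSpace.SeparableSpace X] :
    ((∀ a b : X, ‖a‖ = 1 → ‖b‖ = 1 → ∃ h : X ≃ₗᵢ[ℝ] X, h a = b) →
      ∀ p : X, ‖p‖ = 1 → ∃! φ : X →L[ℝ] ℝ, ‖φ‖ = 1 ∧ φ p = 1) ∧
    ¬ IsStrongGurarii.{u} X := by
  refine ⟨fun htrans p hp => ?_, fun hX => ?_⟩
  · have : Nontrivial X := ⟨⟨p, 0, norm_ne_zero_iff.1 (by simp [hp])⟩⟩
    obtain ⟨q, hq, hsmooth⟩ := exists_isSmoothPoint (E := X)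
    obtain ⟨e, rfl⟩ := htrans q p hq hp
    exact hsmooth.map e
  · have := hX.nontrivial
    obtain ⟨p, hp, hsmooth⟩ := exists_isSmoothPoint (E := X)
    let a : ULift.{u} (ℝ × ℝ) := ⟨(1, 0)⟩
    let b : ULift.{u} (ℝ × ℝ) := ⟨(0, 1)⟩
    obtain ⟨g, rfl⟩ :=
      hX.exists_linearIsometry_apply_eq (d := a + b) (by simp [ULift.norm_def, a, b]) hp
    refine not_isSmoothPoint_add (a := g a) (b := g b) ?_ ?_ ?_ ?_ (by rwa [← map_add])
    all_goals simp [← map_add, ← map_sub, ULift.norm_def, a, b]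
end

section
/- Let X be a Banach space that is the completion of the union of a transfinite continuous chain (X_α)_{α<ρ} with X₀ separable, where each X_{α+1} arises from X_α by a pushout along an isometric embedding of a finite-dimensional space E_α ⊆ F_α into X_α. If C ⊆ X₀ is a closed subspace isometric to c₀, and P₀ : X₀ → C is a bounded projection (which exists with ‖P₀‖ ≤ 2 by Sobczyk's theorem), then P₀ extends to a bounded projection P : X → C with ‖P‖ = ‖P₀‖. In particular, every copy of c₀ contained in X₀ is complemented in X. -/
/-!
Extend `P₀` up the chain without increasing its norm. At a successor step `X_{α+1}` is the
pushout of `X_α ⊇ E_α ⊆ F_α`: the current extension, restricted to `E_α`, extends to the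
finite-dimensional `F_α` with the same norm because `c₀` is `1`-injective for finite-dimensional
spaces, and the universal property glues the two maps. At a limit step the extensions built so far
are compatible, so they define one operator on `⋃_{β<α} X_β`, which extends by continuity to its
closure `X_α` (the target `C ≅ c₀` is complete); the same argument extends from the dense union of
the whole chain to `X`. The recursion is run as Zorn's lemma on partial operators.
-/

universe u v

open Filter Topology ZeroAtInfty

theorem ContinuousLinearMap.tendsto_opNorm_zero_of_tendsto_apply {𝕜 E F ι : Type*}
    [NontriviallyNormedField 𝕜] [CompleteSpace 𝕜] [NormedAddCommGroup E] [NormedSpace 𝕜 E]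
    [FiniteDimensional 𝕜 E] [NormedAddCommGroup F] [NormedSpace 𝕜 F] {l : Filter ι} {f : ι → E →L[𝕜] F}
    (h : ∀ x, Tendsto (fun i => f i x) l (𝓝 0)) : Tendsto (fun i => ‖f i‖) l (𝓝 0) := by
  let b := Module.finBasis 𝕜 E
  obtain ⟨C, -, hC⟩ := b.exists_opNorm_le (F := F)
  have hsum : Tendsto (fun i => C * ∑ j, ‖f i (b j)‖) l (𝓝 0) := by
    simpa using (tendsto_finsetSum _ fun j _ => (h (b j)).norm).const_mul C
  refine squeeze_zero (fun _ => norm_nonneg _) (fun i => hC ?_ fun j => ?_) hsum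
  · exact Finset.sum_nonneg fun _ _ => norm_nonneg _
  · exact Finset.single_le_sum (fun j _ => norm_nonneg (f i (b j))) (Finset.mem_univ j)

namespace ZeroAtInftyContinuousMap

theorem norm_apply_le {α β : Type*} [TopologicalSpace α] [NormedAddCommGroup β] (g : C₀(α, β))
    (x : α) : ‖g x‖ ≤ ‖g‖ := by
  have := BoundedContinuousFunction.norm_coe_le_norm g.toBCF x
  rwa [norm_toBCF_eq_norm] at this

variable {ι F : Type*} [TopologicalSpace ι] [DiscreteTopology ι]
  [NormedAddCommGroup F] [NormedSpace ℝ F] [FiniteDimensional ℝ F]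

/-- Extend each coordinate functional by Hahn–Banach; the extensions still tend to `0` because in
finite dimension pointwise convergence of functionals is norm convergence. -/
theorem exists_extension_norm_le (p : Submodule ℝ F) (T : p →L[ℝ] C₀(ι, ℝ)) :
    ∃ S : F →L[ℝ] C₀(ι, ℝ), (∀ x : p, S x = T x) ∧ ‖S‖ ≤ ‖T‖ := by
  let coord (i : ι) : p →L[ℝ] ℝ := LinearMap.mkContinuous
    { toFun := fun x => T x i, map_add' := by simp, map_smul' := by simp } ‖T‖
    fun x => (norm_apply_le (T x) i).trans (T.le_opNorm x)
  have hcoord_le (i : ι) : ‖coord i‖ ≤ ‖T‖ :=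
    LinearMap.mkContinuous_norm_le _ (norm_nonneg T) _
  choose g hg hg_norm using fun i => exists_extension_norm_eq p (coord i)
  have hg_tendsto : Tendsto (fun i => ‖g i‖) cofinite (𝓝 0) := by
    simp_rw [hg_norm]
    refine ContinuousLinearMap.tendsto_opNorm_zero_of_tendsto_apply fun x => ?_
    rw [← cocompact_eq_cofinite]
    exact (T x).zero_at_infty'
  let Sx (x : F) : C₀(ι, ℝ) :=
    { toFun := fun i => g i x
      continuous_toFun := continuous_of_discreteTopology
      zero_at_infty' := by
        rw [cocompact_eq_cofinite]
        refine squeeze_zero_norm (fun i => (g i).le_opNorm x) ?_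
        simpa using hg_tendsto.mul_const ‖x‖ }
  have hSx (x : F) : ‖Sx x‖ ≤ ‖T‖ * ‖x‖ := by
    rw [← norm_toBCF_eq_norm]
    refine (BoundedContinuousFunction.norm_le (by positivity)).2 fun i => ?_
    exact ((g i).le_opNorm x).trans (by gcongr; exact (hg_norm i).trans_le (hcoord_le i))
  refine ⟨LinearMap.mkContinuous
    { toFun := Sx
      map_add' := fun x y => by ext i; simp [Sx]
      map_smul' := fun r x => by ext i; simp [Sx] } ‖T‖ hSx, fun x => ?_,
    LinearMap.mkContinuous_norm_le _ (norm_nonneg T) _⟩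
  ext i
  exact hg i x

end ZeroAtInftyContinuousMap

theorem LinearIsometryEquiv.exists_extension_norm_le {ι F W : Type*} [TopologicalSpace ι]
    [DiscreteTopology ι] [NormedAddCommGroup F] [NormedSpace ℝ F] [FiniteDimensional ℝ F]
    [NormedAddCommGroup W] [NormedSpace ℝ W] (Φ : W ≃ₗᵢ[ℝ] C₀(ι, ℝ)) (p : Submodule ℝ F)
    (T : p →L[ℝ] W) : ∃ S : F →L[ℝ] W, (∀ x : p, S x = T x) ∧ ‖S‖ ≤ ‖T‖ := by
  obtain ⟨S, hS, hS_norm⟩ := ZeroAtInftyContinuousMap.exists_extension_norm_le p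
    (Φ.toLinearIsometry.toContinuousLinearMap.comp T)
  refine ⟨Φ.symm.toLinearIsometry.toContinuousLinearMap.comp S, fun x => by simp [hS], ?_⟩
  rw [Φ.symm.toLinearIsometry.norm_toContinuousLinearMap_comp]
  rwa [Φ.toLinearIsometry.norm_toContinuousLinearMap_comp] at hS_norm

namespace LinearPMap

section Normed

variable {𝕜 E F : Type*} [NontriviallyNormedField 𝕜] [NormedAddCommGroup E] [NormedSpace 𝕜 E]
  [NormedAddCommGroup F] [NormedSpace 𝕜 F]

def IsBoundedBy (f : E →ₗ.[𝕜] F) (M : ℝ) : Prop :=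
  ∀ x : f.domain, ‖f x‖ ≤ M * ‖x‖

theorem isBoundedBy_mk {V : Submodule 𝕜 E} (T : V →L[𝕜] F) {M : ℝ} (hT : ‖T‖ ≤ M) :
    (mk V (T : V →ₗ[𝕜] F)).IsBoundedBy M :=
  fun x => (T.le_opNorm x).trans (by gcongr)

theorem le_mk {f : E →ₗ.[𝕜] F} {V : Submodule 𝕜 E} (hV : f.domain ≤ V) (T : V →ₗ[𝕜] F)
    (hT : ∀ x : f.domain, T ⟨x, hV x.2⟩ = f x) : f ≤ mk V T :=
  ⟨hV, fun x y hxy => by rw [← hT x]; congr 1; exact Subtype.ext hxy⟩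

variable {f : E →ₗ.[𝕜] F} {M : ℝ}

theorem IsBoundedBy.sSup {c : Set (E →ₗ.[𝕜] F)} (hc : DirectedOn (· ≤ ·) c) (hne : c.Nonempty)
    (h : ∀ f ∈ c, f.IsBoundedBy M) : (LinearPMap.sSup c hc).IsBoundedBy M := by
  rintro ⟨x, hx⟩
  obtain ⟨f, hf, hxf⟩ := (mem_domain_sSup_iff hne hc).1 hx
  exact (LinearPMap.sSup_apply hc hf ⟨x, hxf⟩).symm ▸ h f hf ⟨x, hxf⟩

theorem IsBoundedBy.exists_extension_of_pushout (hf : f.IsBoundedBy M) (hM : 0 ≤ M)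
    {A B G : Submodule 𝕜 E} (hfA : f.domain = A) (hAB : A ≤ B)
    (hG : ∀ (p : Submodule 𝕜 G) (T : p →L[𝕜] F), ∃ S : G →L[𝕜] F,
      (∀ x : p, S x = T x) ∧ ‖S‖ ≤ ‖T‖)
    (hpush : ∀ (T : A →L[𝕜] F) (S : G →L[𝕜] F),
      (∀ (x : E) (hx : x ∈ A) (hx' : x ∈ G), T ⟨x, hx⟩ = S ⟨x, hx'⟩) →
      ∃ h : B →L[𝕜] F, (∀ (x : E) (hx : x ∈ A), h ⟨x, hAB hx⟩ = T ⟨x, hx⟩) ∧ ‖h‖ ≤ max ‖T‖ ‖S‖) :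
    ∃ g : E →ₗ.[𝕜] F, f ≤ g ∧ g.domain = B ∧ g.IsBoundedBy M := by
  subst hfA
  let T : f.domain →L[𝕜] F := f.toFun.mkContinuous M hf
  have hT : ‖T‖ ≤ M := LinearMap.mkContinuous_norm_le _ hM _
  let p : Submodule 𝕜 G := f.domain.comap G.subtype
  let restrict : p →L[𝕜] f.domain := (G.subtypeL.comp p.subtypeL).codRestrict f.domain (·.2)
  obtain ⟨S, hST, hS⟩ := hG p (T.comp restrict)
  have hTS : ‖T.comp restrict‖ ≤ M := T.comp restrict |>.opNorm_le_bound hM fun x => hf _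
  obtain ⟨h, hhT, hh⟩ := hpush T S fun x hx hx' => (hST ⟨⟨x, hx'⟩, hx⟩).symm
  exact ⟨mk B h, le_mk hAB _ fun x => hhT x x.2, rfl,
    isBoundedBy_mk h (hh.trans (max_le hT (hS.trans hTS)))⟩

variable [CompleteSpace F]

theorem IsBoundedBy.exists_continuousLinearMap (hf : f.IsBoundedBy M) (hM : 0 ≤ M)
    (hdense : Dense (f.domain : Set E)) :
    ∃ P : E →L[𝕜] F, ‖P‖ ≤ M ∧ ∀ x : f.domain, P x = f x := by
  have hrange : DenseRange f.domain.subtype := by simpa using hdense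
  exact ⟨f.toFun.extendOfNorm f.domain.subtype, LinearMap.opNorm_extendOfNorm_le hrange hM hf,
    LinearMap.extendOfNorm_eq hrange ⟨M, hf⟩⟩

theorem IsBoundedBy.exists_extension_of_le_topologicalClosure (hf : f.IsBoundedBy M)
    (hM : 0 ≤ M) {V : Submodule 𝕜 E} (hfV : f.domain ≤ V)
    (hVf : V ≤ f.domain.topologicalClosure) :
    ∃ g : E →ₗ.[𝕜] F, f ≤ g ∧ g.domain = V ∧ g.IsBoundedBy M := by
  let incl : f.domain →ₗ[𝕜] V := Submodule.inclusion hfV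
  have hrange : DenseRange incl :=
    (denseRange_inclusion_iff (s := (f.domain : Set E)) (t := V) hfV).2
      (by rw [← Submodule.topologicalClosure_coe]; exact hVf)
  let P := f.toFun.extendOfNorm incl
  exact ⟨mk V P, le_mk hfV _ fun x => LinearMap.extendOfNorm_eq hrange ⟨M, hf⟩ x, rfl,
    isBoundedBy_mk P (LinearMap.opNorm_extendOfNorm_le hrange hM hf)⟩

end Normed

theorem exists_extension_along_chain {R E F ι : Type*} [Ring R] [AddCommGroup E] [Module R E]
    [AddCommGroup F] [Module R F] [ConditionallyCompleteLinearOrderBot ι]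
    (D : ι → Submodule R E)
    (hD : ∀ A : Set ι, BddAbove A → D (sSup A) = ⨆ a ∈ A, D a)
    (p : (E →ₗ.[R] F) → Prop)
    (hp : ∀ c (hc : DirectedOn (· ≤ ·) c), c.Nonempty → (∀ f ∈ c, p f) → p (LinearPMap.sSup c hc))
    {α₀ ρ : ι} (hα₀ : α₀ ≤ ρ)
    (hstep : ∀ α, α₀ ≤ α → α < ρ → ∀ f : E →ₗ.[R] F, f.domain = D α → p f →
      ∃ β, α < β ∧ β ≤ ρ ∧ ∃ g, f ≤ g ∧ g.domain = D β ∧ p g)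
    {f₀ : E →ₗ.[R] F} (hf₀ : f₀.domain = D α₀) (hp₀ : p f₀) :
    ∃ f, f₀ ≤ f ∧ f.domain = D ρ ∧ p f := by
  -- The index component makes every step strictly increasing, so a maximal pair sits at `ρ`.
  let S : Set (ι × (E →ₗ.[R] F)) := {m | α₀ ≤ m.1 ∧ m.1 ≤ ρ ∧ m.2.domain = D m.1 ∧ p m.2}
  have hchain : ∀ c ⊆ S, IsChain (· ≤ ·) c → ∀ y ∈ c, ∃ ub ∈ S, ∀ z ∈ c, z ≤ ub := by
    intro c hcS hc y hy
    have hdir : DirectedOn (· ≤ ·) (Prod.snd '' c) :=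
      (hc.image_of_map_rel _ _ _ fun _ _ h => h.2).directedOn
    have hbdd : BddAbove (Prod.fst '' c) := ⟨ρ, by rintro _ ⟨m, hm, rfl⟩; exact (hcS hm).2.1⟩
    refine ⟨(sSup (Prod.fst '' c), LinearPMap.sSup _ hdir), ⟨?_, ?_, ?_, ?_⟩,
      fun z hz => ⟨le_csSup hbdd ⟨z, hz, rfl⟩, LinearPMap.le_sSup hdir ⟨z, hz, rfl⟩⟩⟩
    · exact (hcS hy).1.trans (le_csSup hbdd ⟨y, hy, rfl⟩)
    · exact csSup_le ⟨y.1, y, hy, rfl⟩ (by rintro _ ⟨m, hm, rfl⟩; exact (hcS hm).2.1)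
    · rw [domain_sSup, hD _ hbdd, sSup_image, iSup_image, iSup_image]
      exact biSup_congr fun m hm => (hcS hm).2.2.1
    · exact hp _ hdir ⟨y.2, y, hy, rfl⟩ (by rintro _ ⟨m, hm, rfl⟩; exact (hcS hm).2.2.2)
  obtain ⟨⟨α, f⟩, hf₀f, hmax⟩ := zorn_le_nonempty₀ S hchain (α₀, f₀) ⟨le_rfl, hα₀, hf₀, hp₀⟩
  obtain ⟨hα₀α, hαρ, hf, hpf⟩ := hmax.prop
  obtain rfl : α = ρ := by
    by_contra hne
    obtain ⟨β, hαβ, hβρ, g, hfg, hg, hpg⟩ := hstep α hα₀α (hαρ.lt_of_ne hne) f hf hpf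
    exact hαβ.not_ge (hmax.2 (y := (β, g)) ⟨hα₀α.trans hαβ.le, hβρ, hg, hpg⟩ ⟨hαβ.le, hfg⟩).1
  exact ⟨f, hf₀f.2, hf, hpf⟩

end LinearPMap

section unionBelow

variable {R X : Type*} [Semiring R] [AddCommMonoid X] [Module R X]

def unionBelow (Xs : Ordinal.{v} → Submodule R X) (α : Ordinal.{v}) : Submodule R X :=
  ⨆ β ∈ Set.Iio α, Xs β

variable (Xs : Ordinal.{v} → Submodule R X)

theorem le_unionBelow {α β : Ordinal.{v}} (h : β < α) : Xs β ≤ unionBelow Xs α :=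
  le_iSup₂ (f := fun β (_ : β ∈ Set.Iio α) => Xs β) β h

theorem unionBelow_le (hmono : Monotone Xs) (α : Ordinal.{v}) : unionBelow Xs α ≤ Xs α :=
  iSup₂_le fun _ hβ => hmono (le_of_lt hβ)

theorem unionBelow_add_one (hmono : Monotone Xs) (α : Ordinal.{v}) :
    unionBelow Xs (α + 1) = Xs α :=
  le_antisymm (iSup₂_le fun _ hβ => hmono (Order.lt_add_one_iff.1 hβ))
    (le_unionBelow Xs (Order.lt_add_one_iff.2 le_rfl))

theorem unionBelow_sSup {A : Set Ordinal.{v}} (hA : BddAbove A) :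
    unionBelow Xs (sSup A) = ⨆ a ∈ A, unionBelow Xs a := by
  refine le_antisymm (iSup₂_le fun β hβ => ?_) (iSup₂_le fun a ha => iSup₂_le fun β hβ => ?_)
  · obtain ⟨a, ha, hβa⟩ := (lt_csSup_iff' hA).1 hβ
    exact le_iSup₂_of_le a ha (le_unionBelow Xs hβa)
  · exact le_unionBelow Xs ((lt_csSup_iff' hA).2 ⟨a, ha, hβ⟩)

end unionBelow

theorem LinearPMap.IsBoundedBy.exists_extension_unionBelow_add_one {𝕜 E F : Type*}
    [NontriviallyNormedField 𝕜] [NormedAddCommGroup E] [NormedSpace 𝕜 E] [NormedAddCommGroup F]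
    [NormedSpace 𝕜 F] [CompleteSpace F] {Xs : Ordinal.{v} → Submodule 𝕜 E} (hmono : Monotone Xs)
    {ρ : Ordinal.{v}}
    (hlim : ∀ α < ρ, Order.IsSuccLimit α → Xs α = (unionBelow Xs α).topologicalClosure)
    {M : ℝ} (hM : 0 ≤ M)
    (hsucc : ∀ α, α + 1 < ρ → ∀ f : E →ₗ.[𝕜] F, f.domain = Xs α → f.IsBoundedBy M →
      ∃ g, f ≤ g ∧ g.domain = Xs (α + 1) ∧ g.IsBoundedBy M)
    {α : Ordinal.{v}} (hα : α ≠ 0) (hαρ : α < ρ) {f : E →ₗ.[𝕜] F}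
    (hf : f.domain = unionBelow Xs α) (hfM : f.IsBoundedBy M) :
    ∃ g, f ≤ g ∧ g.domain = unionBelow Xs (α + 1) ∧ g.IsBoundedBy M := by
  rw [unionBelow_add_one Xs hmono]
  rcases Ordinal.zero_or_succ_or_isSuccLimit α with rfl | ⟨γ, rfl⟩ | hlimα
  · exact absurd rfl hα
  · rw [Order.succ_eq_add_one] at hf hαρ ⊢
    rw [unionBelow_add_one Xs hmono] at hf
    exact hsucc γ hαρ f hf hfM
  · exact hfM.exists_extension_of_le_topologicalClosure hM (hf ▸ unionBelow_le Xs hmono α)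
      (hf ▸ (hlim α hαρ hlimα).le)

theorem sobczyk_pushout_chain_general
    {X : Type u} [NormedAddCommGroup X] [NormedSpace ℝ X]
    (ρ : Ordinal.{0}) (Xs : Ordinal.{0} → Subspace ℝ X)
    (hmono : ∀ α β : Ordinal, α ≤ β → Xs α ≤ Xs β)
    (hlim : ∀ α < ρ, Order.IsSuccLimit α →
      Xs α = (⨆ β ∈ Set.Iio α, Xs β).topologicalClosure)
    (hdense : Dense (⋃ α ∈ Set.Iio ρ, (Xs α : Set X)))
    (hpush : ∀ α : Ordinal, α + 1 < ρ →
      ∃ (Fa : Subspace ℝ X) (_ : FiniteDimensional ℝ Fa)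
        (hle : Fa ≤ Xs (α + 1)),
        Xs (α + 1) = Xs α ⊔ Fa ∧
        ∀ (V : Type u) [NormedAddCommGroup V] [NormedSpace ℝ V] [CompleteSpace V],
          ∀ (T : (Xs α) →L[ℝ] V) (S : Fa →L[ℝ] V),
            (∀ (x : X) (hx : x ∈ Xs α) (hx' : x ∈ Fa), T ⟨x, hx⟩ = S ⟨x, hx'⟩) →
            ∃ h : (Xs (α + 1)) →L[ℝ] V,
              (∀ (x : X) (hx : x ∈ Xs α),
                h ⟨x, hmono α (α + 1) (le_self_add (a := α) (b := 1)) hx⟩ = T ⟨x, hx⟩) ∧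
              (∀ (x : X) (hx : x ∈ Fa), h ⟨x, hle hx⟩ = S ⟨x, hx⟩) ∧
              ‖h‖ ≤ max ‖T‖ ‖S‖)
    (C : Subspace ℝ X) (hC : C ≤ Xs 0)
    (hc0 : Nonempty (C ≃ₗᵢ[ℝ] ZeroAtInftyContinuousMap ℕ ℝ))
    (P₀ : (Xs 0) →L[ℝ] C)
    (hP₀ : ∀ (x : X) (hx : x ∈ C), P₀ ⟨x, hC hx⟩ = ⟨x, hx⟩) :
    ∃ P : X →L[ℝ] C,
      (∀ (x : X) (hx : x ∈ C), P x = ⟨x, hx⟩) ∧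
      (∀ x : (Xs 0), P (x : X) = P₀ x) ∧
      ‖P‖ = ‖P₀‖ := by
  obtain ⟨Φ⟩ := hc0
  have : CompleteSpace C := Φ.toIsometryEquiv.completeSpace
  have hmono' : Monotone Xs := fun α β h => hmono α β h
  have hsucc : ∀ α, α + 1 < ρ → ∀ f : X →ₗ.[ℝ] C, f.domain = Xs α → f.IsBoundedBy ‖P₀‖ →
      ∃ g, f ≤ g ∧ g.domain = Xs (α + 1) ∧ g.IsBoundedBy ‖P₀‖ := by
    intro α hα f hf hfM
    obtain ⟨Fa, _, _, _, huniv⟩ := hpush α hα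
    exact hfM.exists_extension_of_pushout P₀.opNorm_nonneg hf (hmono α (α + 1) le_self_add)
      Φ.exists_extension_norm_le fun T S hTS => (huniv C T S hTS).imp fun _ h => ⟨h.1, h.2.2⟩
  have hρ : 0 < ρ := by
    obtain ⟨x, hx⟩ := hdense.nonempty
    obtain ⟨α, hα, -⟩ := Set.mem_iUnion₂.1 hx
    exact zero_le.trans_lt hα
  obtain ⟨f, hP₀f, hf, hfM⟩ := LinearPMap.exists_extension_along_chain (unionBelow Xs)
    (fun _ => unionBelow_sSup Xs) (·.IsBoundedBy ‖P₀‖)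
    (fun c hc hne h => LinearPMap.IsBoundedBy.sSup hc hne h) (Order.add_one_le_of_lt hρ)
    (fun α hα hαρ f hf hfM => ⟨α + 1, Order.lt_add_one_iff.2 le_rfl, Order.add_one_le_of_lt hαρ,
      hfM.exists_extension_unionBelow_add_one hmono' hlim P₀.opNorm_nonneg hsucc
        (Order.add_one_le_iff.1 hα).ne' hαρ hf⟩)
    (unionBelow_add_one Xs hmono' 0).symm (LinearPMap.isBoundedBy_mk P₀ le_rfl)
  have hf_dense : Dense (f.domain : Set X) := by
    rw [hf]
    have hsub : (⋃ α ∈ Set.Iio ρ, (Xs α : Set X)) ⊆ unionBelow Xs ρ :=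
      Set.iUnion₂_subset fun β hβ => SetLike.coe_subset_coe.2 (le_unionBelow Xs hβ)
    exact hdense.mono hsub
  obtain ⟨P, hP, hPf⟩ := hfM.exists_continuousLinearMap P₀.opNorm_nonneg hf_dense
  have hPP₀ (x : Xs 0) : P x = P₀ x := (hPf ⟨x, hP₀f.1 x.2⟩).trans (hP₀f.2 rfl).symm
  refine ⟨P, fun x hx => (hPP₀ ⟨x, hC hx⟩).trans (hP₀ x hx), hPP₀, le_antisymm hP ?_⟩
  refine P₀.opNorm_le_bound P.opNorm_nonneg fun x => ?_
  rw [← hPP₀ x]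
  exact P.le_opNorm x

/-- **Sobczyk's theorem along pushout chains.** Let `X` be a Banach space that is the
completion of the union of a continuous transfinite chain `(X_α)_{α<ρ}` with `X₀`
separable, in which each `X_{α+1}` arises from `X_α` by a pushout along a
finite-dimensional space (encoded by the pushout universal property). If `C ⊆ X₀` is a
closed subspace isometric to `c₀` and `P₀ : X₀ → C` is a bounded projection, then `P₀`
extends to a bounded projection `P : X → C` with `‖P‖ = ‖P₀‖`. In particular every copy
of `c₀` contained in `X₀` is complemented in `X`. -/
theorem sobczyk_pushout_chain
    {X : Type u} [NormedAddCommGroup X] [NormedSpace ℝ X] [CompleteSpace X]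
    (ρ : Ordinal.{0}) (Xs : Ordinal.{0} → Subspace ℝ X)
    (hmono : ∀ α β : Ordinal, α ≤ β → Xs α ≤ Xs β)
    (hsep : TopologicalSpace.IsSeparable ((Xs 0 : Set X)))
    (hlim : ∀ α < ρ, Order.IsSuccLimit α →
      Xs α = (⨆ β ∈ Set.Iio α, Xs β).topologicalClosure)
    (hdense : Dense (⋃ α ∈ Set.Iio ρ, (Xs α : Set X)))
    (hpush : ∀ α : Ordinal, α + 1 < ρ →
      ∃ (Fa : Subspace ℝ X) (_ : FiniteDimensional ℝ Fa)
        (hle : Fa ≤ Xs (α + 1)),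
        Xs (α + 1) = Xs α ⊔ Fa ∧
        ∀ (V : Type u) [NormedAddCommGroup V] [NormedSpace ℝ V] [CompleteSpace V],
          ∀ (T : (Xs α) →L[ℝ] V) (S : Fa →L[ℝ] V),
            (∀ (x : X) (hx : x ∈ Xs α) (hx' : x ∈ Fa), T ⟨x, hx⟩ = S ⟨x, hx'⟩) →
            ∃ h : (Xs (α + 1)) →L[ℝ] V,
              (∀ (x : X) (hx : x ∈ Xs α),
                h ⟨x, hmono α (α + 1) (le_self_add (a := α) (b := 1)) hx⟩ = T ⟨x, hx⟩) ∧
              (∀ (x : X) (hx : x ∈ Fa), h ⟨x, hle hx⟩ = S ⟨x, hx⟩) ∧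
              ‖h‖ ≤ max ‖T‖ ‖S‖)
    (C : Subspace ℝ X) (hC : C ≤ Xs 0) (hCclosed : IsClosed (C : Set X))
    (hc0 : Nonempty (C ≃ₗᵢ[ℝ] ZeroAtInftyContinuousMap ℕ ℝ))
    (P₀ : (Xs 0) →L[ℝ] C)
    (hP₀ : ∀ (x : X) (hx : x ∈ C), P₀ ⟨x, hC hx⟩ = ⟨x, hx⟩) :
    ∃ P : X →L[ℝ] C,
      (∀ (x : X) (hx : x ∈ C), P x = ⟨x, hx⟩) ∧
      (∀ x : (Xs 0), P (x : X) = P₀ x) ∧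
      ‖P‖ = ‖P₀‖ :=
  sobczyk_pushout_chain_general ρ Xs hmono hlim hdense hpush C hC hc0 P₀ hP₀
end

section
/- Let A be an uncountable almost disjoint family of infinite subsets of ℕ and K_A the associated Mrówka compactum (one-point compactification of the locally compact space ℕ ∪ A, where points of ℕ are isolated and basic neighborhoods of A ∈ A are {A} ∪ (A \ F) for finite F). Then the natural isometric copy of c₀ in C(K_A) (spanned by characteristic functions of singletons of ℕ) is not complemented in C(K_A). -/
/-!
For `A ∈ 𝒜` let `f_A` be the indicator of the clopen set `{A} ∪ A`. If `P` projected onto `c₀`,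
then for each `n` and each finite `t ⊆ 𝒜` we would have `∑_{A ∈ t} |(f_A - P f_A)(n)| ≤ 1 + ‖P‖`:
a signed sum `g` of the `f_A` is bounded by `1` off `ℕ`, so `g` differs from its truncation to
`[-1, 1]` by an element of `c₀`, which `I - P` annihilates. Hence only countably many `A` have
`(f_A - P f_A)(n) ≠ 0` for some `n`, and as `𝒜` is uncountable, some `f_A - P f_A` vanishes on
`ℕ`, hence at its limit point `A`; but there it equals `f_A(A) - 0 = 1`.
-/

/-- The underlying set of points of the Mrówka space associated with an almost disjoint
family `𝒜` of subsets of `ℕ`: the natural numbers together with one point for each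
member of `𝒜`. (A type synonym for `ℕ ⊕ ↥𝒜`, so as to carry the Mrówka topology.) -/
def MrowkaPoints (𝒜 : Set (Set ℕ)) : Type := ℕ ⊕ ↥𝒜

/-- The canonical base of the Mrówka topology: singletons of natural numbers are open,
and basic neighbourhoods of a point `A ∈ 𝒜` are `{A} ∪ (A \ F)` for `F ⊆ ℕ` finite. -/
def mrowkaBasis (𝒜 : Set (Set ℕ)) : Set (Set (MrowkaPoints 𝒜)) :=
  {s | (∃ n : ℕ, s = {Sum.inl n}) ∨
    ∃ (A : ↥𝒜) (F : Set ℕ), F.Finite ∧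
      s = insert (Sum.inr A) (Sum.inl '' ((A : Set ℕ) \ F))}

open Topology Filter TopologicalSpace

section ProjectionOntoFunctionsVanishingOn

variable {X : Type*} [TopologicalSpace X] [CompactSpace X] {Z : Set X}
  {P : C(X, ℝ) →L[ℝ] C(X, ℝ)}

lemma norm_sub_map_le_of_abs_le_one_on (hP : ∀ f, (∀ z ∈ Z, f z = 0) → P f = f)
    {g : C(X, ℝ)} (hg : ∀ z ∈ Z, |g z| ≤ 1) : ‖g - P g‖ ≤ 1 + ‖P‖ := by
  have h₁ : (-1 : ℝ) ≤ 1 := by norm_num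
  let clamp : C(ℝ, ℝ) := ⟨fun v => Set.projIcc (-1) 1 h₁ v, by fun_prop⟩
  let h := clamp.comp g
  have hh : ‖h‖ ≤ 1 :=
    (ContinuousMap.norm_le _ zero_le_one).2 fun x => abs_le.2 (Set.projIcc (-1) 1 h₁ (g x)).2
  have hgh : P (g - h) = g - h := hP _ fun z hz => by
    show g z - (Set.projIcc (-1) 1 h₁ (g z) : ℝ) = 0
    rw [Set.projIcc_of_mem h₁ (abs_le.1 (hg z hz)), sub_self]
  calc ‖g - P g‖ = ‖h - P h‖ := by
        rw [sub_eq_sub_iff_sub_eq_sub.2 (by rw [← map_sub, hgh])]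
    _ ≤ ‖h‖ + ‖P‖ * ‖h‖ := (norm_sub_le _ _).trans (by gcongr; exact P.le_opNorm h)
    _ ≤ 1 + ‖P‖ := by nlinarith [norm_nonneg P, norm_nonneg h]

lemma countable_of_forall_finset_sum_abs_le {ι : Type*} {v : ι → ℝ} {C : ℝ}
    (h : ∀ t : Finset ι, ∑ i ∈ t, |v i| ≤ C) : {i | v i ≠ 0}.Countable := by
  simpa [Function.support] using
    (summable_of_sum_le (fun i => abs_nonneg (v i)) h).countable_support

lemma countable_setOf_sub_map_apply_ne_zero (hP : ∀ f, (∀ z ∈ Z, f z = 0) → P f = f)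
    {ι : Type*} (f : ι → C(X, ℝ)) (hf : ∀ z ∈ Z, ∀ t : Finset ι, ∑ i ∈ t, |f i z| ≤ 1)
    (x : X) : {i | (f i - P (f i)) x ≠ 0}.Countable := by
  refine countable_of_forall_finset_sum_abs_le (C := 1 + ‖P‖) fun t => ?_
  let s : ι → ℝ := fun i => SignType.sign ((f i - P (f i)) x)
  have hs : ∀ i, |s i| ≤ 1 := by
    have (σ : SignType) : |(σ : ℝ)| ≤ 1 := by rcases σ with _ | _ | _ <;> simp
    exact fun i => this _
  let g := ∑ i ∈ t, s i • f i
  have hg : ∀ z ∈ Z, |g z| ≤ 1 := fun z hz => calc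
    |g z| = |∑ i ∈ t, s i * f i z| := by simp [g, ContinuousMap.sum_apply]
    _ ≤ ∑ i ∈ t, |s i * f i z| := Finset.abs_sum_le_sum_abs _ _
    _ ≤ ∑ i ∈ t, |f i z| := Finset.sum_le_sum fun i _ => by
      rw [abs_mul]; exact mul_le_of_le_one_left (abs_nonneg _) (hs i)
    _ ≤ 1 := hf z hz t
  calc ∑ i ∈ t, |(f i - P (f i)) x| = (g - P g) x := by
        simp [g, s, map_sum, ContinuousMap.sum_apply, ← Finset.sum_sub_distrib, ← mul_sub]
    _ ≤ ‖g - P g‖ := (le_abs_self _).trans ((g - P g).norm_coe_le_norm x)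
    _ ≤ 1 + ‖P‖ := norm_sub_map_le_of_abs_le_one_on hP hg

end ProjectionOntoFunctionsVanishingOn

namespace MrowkaPoints

variable {𝒜 : Set (Set ℕ)}

-- Points written with `inl`/`inr` have type `MrowkaPoints 𝒜`, hence carry its topology rather
-- than that of the sum type `ℕ ⊕ ↥𝒜`.
def inl (n : ℕ) : MrowkaPoints 𝒜 := Sum.inl n

def inr (A : ↥𝒜) : MrowkaPoints 𝒜 := Sum.inr A

lemma inl_injective : Function.Injective (inl : ℕ → MrowkaPoints 𝒜) := Sum.inl_injective

lemma inr_injective : Function.Injective (inr : ↥𝒜 → MrowkaPoints 𝒜) := Sum.inr_injective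

lemma inl_ne_inr (n : ℕ) (A : ↥𝒜) : inl n ≠ inr A := Sum.inl_ne_inr

lemma inl_or_inr (x : MrowkaPoints 𝒜) : (∃ n, x = inl n) ∨ ∃ A, x = inr A := by
  rcases x with n | A
  exacts [Or.inl ⟨n, rfl⟩, Or.inr ⟨A, rfl⟩]

end MrowkaPoints

open MrowkaPoints

section MrowkaTopology

variable {𝒜 : Set (Set ℕ)}

def mrowkaNbhd (A : ↥𝒜) (F : Set ℕ) : Set (MrowkaPoints 𝒜) :=
  insert (inr A) (inl '' ((A : Set ℕ) \ F))

lemma mem_mrowkaBasis_iff {t : Set (MrowkaPoints 𝒜)} :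
    t ∈ mrowkaBasis 𝒜 ↔ (∃ n, t = {inl n}) ∨ ∃ A F, F.Finite ∧ t = mrowkaNbhd A F :=
  Iff.rfl

lemma mrowkaNbhd_anti (A : ↥𝒜) : Antitone (mrowkaNbhd A) := fun _ _ hFG =>
  Set.insert_subset_insert (Set.image_mono (Set.sdiff_subset_sdiff_right hFG))

lemma eq_mrowkaNbhd_of_inr_mem {t : Set (MrowkaPoints 𝒜)} (ht : t ∈ mrowkaBasis 𝒜) {A : ↥𝒜}
    (hA : inr A ∈ t) : ∃ F : Set ℕ, F.Finite ∧ t = mrowkaNbhd A F := by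
  rcases mem_mrowkaBasis_iff.1 ht with ⟨n, rfl⟩ | ⟨B, F, hF, rfl⟩
  · exact absurd (Set.mem_singleton_iff.1 hA).symm (inl_ne_inr n A)
  · obtain rfl : A = B := by
      rcases hA with h | ⟨n, -, h⟩
      exacts [inr_injective h, absurd h (inl_ne_inr n A)]
    exact ⟨F, hF, rfl⟩

lemma isTopologicalBasis_mrowkaBasis [τ : TopologicalSpace (MrowkaPoints 𝒜)]
    (hτ : τ = generateFrom (mrowkaBasis 𝒜)) : IsTopologicalBasis (mrowkaBasis 𝒜) := by
  refine ⟨fun t₁ ht₁ t₂ ht₂ x hx => ?_, Set.eq_univ_of_forall fun x => ?_, hτ⟩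
  · rcases inl_or_inr x with ⟨n, rfl⟩ | ⟨A, rfl⟩
    · exact ⟨{inl n}, Or.inl ⟨n, rfl⟩, rfl, Set.singleton_subset_iff.2 hx⟩
    · obtain ⟨F₁, hF₁, rfl⟩ := eq_mrowkaNbhd_of_inr_mem ht₁ hx.1
      obtain ⟨F₂, hF₂, rfl⟩ := eq_mrowkaNbhd_of_inr_mem ht₂ hx.2
      exact ⟨mrowkaNbhd A (F₁ ∪ F₂), Or.inr ⟨A, _, hF₁.union hF₂, rfl⟩, Set.mem_insert _ _,
        Set.subset_inter (mrowkaNbhd_anti A Set.subset_union_left)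
          (mrowkaNbhd_anti A Set.subset_union_right)⟩
  · rcases inl_or_inr x with ⟨n, rfl⟩ | ⟨A, rfl⟩
    · exact ⟨_, Or.inl ⟨n, rfl⟩, rfl⟩
    · exact ⟨_, Or.inr ⟨A, ∅, Set.finite_empty, rfl⟩, Set.mem_insert _ _⟩

def mrowkaClopen (A : ↥𝒜) : Set (OnePoint (MrowkaPoints 𝒜)) :=
  (↑) '' mrowkaNbhd A ∅

lemma mem_mrowkaClopen_iff {z : OnePoint (MrowkaPoints 𝒜)}
    (hz : ∀ n, z ≠ ↑(inl n : MrowkaPoints 𝒜)) (A : ↥𝒜) : z ∈ mrowkaClopen A ↔ z = ↑(inr A) := by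
  refine ⟨?_, fun h => ⟨_, Set.mem_insert _ _, h.symm⟩⟩
  rintro ⟨_, rfl | ⟨n, -, rfl⟩, rfl⟩
  exacts [rfl, absurd rfl (hz n)]

lemma sum_abs_indicator_mrowkaClopen_le_one {z : OnePoint (MrowkaPoints 𝒜)}
    (hz : ∀ n, z ≠ ↑(inl n : MrowkaPoints 𝒜)) (t : Finset ↥𝒜) :
    ∑ A ∈ t, |(mrowkaClopen A).indicator (fun _ => (1 : ℝ)) z| ≤ 1 := by
  classical
  calc ∑ A ∈ t, |(mrowkaClopen A).indicator (fun _ => (1 : ℝ)) z|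
      = ((t.filter fun A => z = ↑(inr A)).card : ℝ) := by
        simp [Set.indicator_apply, mem_mrowkaClopen_iff hz, apply_ite, Finset.sum_boole]
    _ ≤ 1 := by
      refine Nat.cast_le_one.2 (Finset.card_le_one.2 fun A hA B hB => ?_)
      rw [Finset.mem_filter] at hA hB
      exact inr_injective (OnePoint.coe_injective (hA.2.symm.trans hB.2))

variable [TopologicalSpace (MrowkaPoints 𝒜)] (hB : IsTopologicalBasis (mrowkaBasis 𝒜))
include hB

lemma nhds_inr_hasBasis (A : ↥𝒜) : (𝓝 (inr A)).HasBasis Set.Finite (mrowkaNbhd A) :=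
  hB.nhds_hasBasis.to_hasBasis
    (fun _ ⟨ht, hA⟩ => (eq_mrowkaNbhd_of_inr_mem ht hA).imp fun _ ⟨hF, h⟩ => ⟨hF, h.ge⟩)
    (fun F hF => ⟨_, ⟨Or.inr ⟨A, F, hF, rfl⟩, Set.mem_insert _ _⟩, le_rfl⟩)

lemma isCompact_mrowkaNbhd (A : ↥𝒜) (F : Set ℕ) : IsCompact (mrowkaNbhd A F) := by
  rw [mrowkaNbhd, Set.image_eq_range]
  refine Tendsto.isCompact_insert_range_of_cofinite ?_
  refine (nhds_inr_hasBasis hB A).tendsto_right_iff.2 fun G hG => ?_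
  filter_upwards [(hG.preimage Subtype.val_injective.injOn).eventually_cofinite_notMem]
    with i hi using Set.mem_insert_of_mem _ ⟨i, ⟨i.2.1, hi⟩, rfl⟩

lemma isClosed_mrowkaNbhd_empty (had : ∀ A ∈ 𝒜, ∀ B ∈ 𝒜, A ≠ B → (A ∩ B).Finite)
    (A : ↥𝒜) : IsClosed (mrowkaNbhd A ∅) := by
  refine isOpen_compl_iff.1 (isOpen_iff_mem_nhds.2 fun x hx => ?_)
  rcases inl_or_inr x with ⟨n, rfl⟩ | ⟨B, rfl⟩
  · exact mem_nhds_iff.2 ⟨_, Set.singleton_subset_iff.2 hx, hB.isOpen (Or.inl ⟨n, rfl⟩), rfl⟩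
  · have hBA : B ≠ A := by rintro rfl; exact hx (Set.mem_insert _ _)
    refine (nhds_inr_hasBasis hB B).mem_iff.2 ⟨(A : Set ℕ) ∩ B,
      had A A.2 B B.2 fun h => hBA (Subtype.ext h.symm), ?_⟩
    rintro _ (rfl | ⟨m, ⟨hmB, hmA⟩, rfl⟩) (h | ⟨k, hk, h⟩)
    · exact hBA (inr_injective h)
    · exact inl_ne_inr k B h
    · exact inl_ne_inr m A h
    · obtain rfl : k = m := inl_injective h
      exact hmA ⟨hk.1, hmB⟩

lemma inr_mem_closure_range_inl {A : ↥𝒜} (hA : (A : Set ℕ).Infinite) :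
    inr A ∈ closure (Set.range (inl : ℕ → MrowkaPoints 𝒜)) :=
  (mem_closure_iff_nhds_basis (nhds_inr_hasBasis hB A)).2 fun _ hF =>
    let ⟨n, hn⟩ := (hA.sdiff hF).nonempty
    ⟨inl n, ⟨n, rfl⟩, Set.mem_insert_of_mem _ ⟨n, hn, rfl⟩⟩

lemma isClopen_mrowkaClopen (had : ∀ A ∈ 𝒜, ∀ B ∈ 𝒜, A ≠ B → (A ∩ B).Finite) (A : ↥𝒜) :
    IsClopen (mrowkaClopen A) :=
  ⟨OnePoint.isClosed_image_coe.2
      ⟨isClosed_mrowkaNbhd_empty hB had A, isCompact_mrowkaNbhd hB A ∅⟩,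
    OnePoint.isOpen_image_coe.2 (hB.isOpen (Or.inr ⟨A, ∅, Set.finite_empty, rfl⟩))⟩

end MrowkaTopology

/-- **The copy of `c₀` in `C(K_𝒜)` is not complemented.** Let `𝒜` be an uncountable
almost disjoint family of infinite subsets of `ℕ` and let `K_𝒜` be the Mrówka compactum,
the one-point compactification of `ℕ ∪ 𝒜` with the Mrówka topology. Then the natural
isometric copy of `c₀` inside `C(K_𝒜)` — the continuous functions vanishing at every
point not in `ℕ` — is not the range of a bounded linear projection. -/
theorem mrowka_c0_not_complemented
    (𝒜 : Set (Set ℕ))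
    (hinf : ∀ A ∈ 𝒜, A.Infinite)
    (had : ∀ A ∈ 𝒜, ∀ B ∈ 𝒜, A ≠ B → (A ∩ B).Finite)
    (hunc : ¬ 𝒜.Countable)
    [τ : TopologicalSpace (MrowkaPoints 𝒜)]
    (hτ : τ = TopologicalSpace.generateFrom (mrowkaBasis 𝒜)) :
    ¬ ∃ P : C(OnePoint (MrowkaPoints 𝒜), ℝ) →L[ℝ] C(OnePoint (MrowkaPoints 𝒜), ℝ),
        (∀ f : C(OnePoint (MrowkaPoints 𝒜), ℝ),
          ∀ p : OnePoint (MrowkaPoints 𝒜),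
            (∀ n : ℕ, p ≠ OnePoint.some (Sum.inl n)) → P f p = 0) ∧
        (∀ f : C(OnePoint (MrowkaPoints 𝒜), ℝ),
          (∀ p : OnePoint (MrowkaPoints 𝒜),
            (∀ n : ℕ, p ≠ OnePoint.some (Sum.inl n)) → f p = 0) → P f = f) := by
  rintro ⟨P, hP_vanish, hP_id⟩
  have hB := isTopologicalBasis_mrowkaBasis hτ
  let f (A : ↥𝒜) : C(OnePoint (MrowkaPoints 𝒜), ℝ) :=
    ⟨(mrowkaClopen A).indicator fun _ => 1,
      (isClopen_mrowkaClopen hB had A).continuous_indicator continuous_const⟩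
  have hcount (n : ℕ) : {A | (f A - P (f A)) ↑(inl n : MrowkaPoints 𝒜) ≠ 0}.Countable :=
    countable_setOf_sub_map_apply_ne_zero
      (Z := {p : OnePoint (MrowkaPoints 𝒜) | ∀ n : ℕ, p ≠ ↑(inl n : MrowkaPoints 𝒜)})
      hP_id f (fun _ hz => sum_abs_indicator_mrowkaClopen_le_one hz) _
  obtain ⟨A, hA⟩ : ∃ A : ↥𝒜, ∀ n, (f A - P (f A)) ↑(inl n : MrowkaPoints 𝒜) = 0 := by
    by_contra! h
    refine hunc (Set.countable_coe_iff.1 (Set.countable_univ_iff.1 ?_))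
    exact (Set.countable_iUnion hcount).mono fun A _ => Set.mem_iUnion.2 (h A)
  have h₀ : (f A - P (f A)) ↑(inr A) = 0 := by
    simpa using map_mem_closure ((f A - P (f A)).continuous.comp OnePoint.continuous_coe)
      (inr_mem_closure_range_inl hB (hinf A A.2)) (t := {0}) (by rintro _ ⟨n, rfl⟩; exact hA n)
  have h₁ : (f A - P (f A)) ↑(inr A) = 1 := by
    have hPA : P (f A) ↑(inr A) = 0 :=
      hP_vanish _ _ fun n h => inl_ne_inr n A (OnePoint.coe_injective h).symm
    rw [ContinuousMap.sub_apply, hPA, sub_zero]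
    exact Set.indicator_of_mem (Set.mem_image_of_mem _ (Set.mem_insert _ _)) (fun _ => (1 : ℝ))
  exact zero_ne_one (h₀.symm.trans h₁)
end
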